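/- arXiv:0906.4536 — 2 statements merged into one kernel-verified Lean document; each statement's English description precedes it below -/
import Mathlib

section
/- For all integers q ≥ 0 and k ≥ 1, the generating function H of triangular-lattice directed animals over ℕ with compact source C_{q,k} = {q, q+2, …, q+2k−2} satisfies, in ℤ[[t]], the identity (1 − 𝒟(t)) · H(t) = (1 − 𝒟(t)^{q+1}) · 𝒟(t)^k. -/
/-- A triangular-lattice directed animal over positions `Q ⊆ ℤ` with source `S`:
sites on line `0` are exactly the source, and every higher site is supported at
the left, at the right, or at the center (two lines below). -/
def IsTriAnimal (Q : Set ℤ) (S : Finset ℤ) (A : Finset (ℤ × ℕ)) : Prop :=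
  (∀ x ∈ A, x.1 ∈ Q) ∧
  (∀ q : ℤ, (q, 0) ∈ A ↔ q ∈ S) ∧
  ∀ x ∈ A, 1 ≤ x.2 →
    (x.1 - 1, x.2 - 1) ∈ A ∨ (x.1 + 1, x.2 - 1) ∈ A ∨ (2 ≤ x.2 ∧ (x.1, x.2 - 2) ∈ A)

/-- A square-lattice directed animal over positions `Q ⊆ ℤ` with source `S`. -/
def IsSqAnimal (Q : Set ℤ) (S : Finset ℤ) (A : Finset (ℤ × ℕ)) : Prop :=
  (∀ x ∈ A, x.1 ∈ Q) ∧
  (∀ q : ℤ, (q, 0) ∈ A ↔ q ∈ S) ∧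
  ∀ x ∈ A, 1 ≤ x.2 →
    (x.1 - 1, x.2 - 1) ∈ A ∨ (x.1 + 1, x.2 - 1) ∈ A

/-- Number of triangular-lattice directed animals over `Q` with source `S` and area `n`. -/
noncomputable def triCount (Q : Set ℤ) (S : Finset ℤ) (n : ℕ) : ℕ :=
  {A : Finset (ℤ × ℕ) | IsTriAnimal Q S A ∧ A.card = n}.ncard

/-- Number of square-lattice directed animals over `Q` with source `S` and area `n`. -/
noncomputable def sqCount (Q : Set ℤ) (S : Finset ℤ) (n : ℕ) : ℕ :=
  {A : Finset (ℤ × ℕ) | IsSqAnimal Q S A ∧ A.card = n}.ncard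

/-- Generating function of triangular-lattice directed animals over `Q` with source `S`. -/
noncomputable def triGF (Q : Set ℤ) (S : Finset ℤ) : PowerSeries ℤ :=
  PowerSeries.mk fun n => (triCount Q S n : ℤ)

/-- Generating function of square-lattice directed animals over `Q` with source `S`. -/
noncomputable def sqGF (Q : Set ℤ) (S : Finset ℤ) : PowerSeries ℤ :=
  PowerSeries.mk fun n => (sqCount Q S n : ℤ)

/-!
Let the source of an animal `A` have all its points of one parity and let `A` touch the wall
column `0`. Climbing from the lowest site of `A` in column `0` through concurrent sites reaches a
pyramid (in the sense of Viennot's heaps of pieces); dropped to the floor it becomes a half-animal,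
and what is left of `A` is an animal avoiding column `0`, which moreover avoids column `1` if `0`
is in the source and touches column `1` otherwise. Dropping the half-animal back onto the rest
inverts this, so the generating function of such animals factors with a factor `𝒟`.

Write `H_{q,k}` for the generating function of the compact source `C_{q,k}` and `T_{q,k}` for the
animals touching column `0` among those. Translating columns, the factorisation gives
`H_{0,k+1} = 𝒟 H_{0,k}` and `T_{q+1,k} = 𝒟 T_{q,k}`, so `T_{q,k} = 𝒟^(q+k)`; splitting by
whether column `0` is touched, `H_{q+1,k} = H_{q,k} + 𝒟^(q+1+k)`, and the identity follows by
induction on `q`.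
-/

open Set

open scoped Classical

noncomputable section

/-- Sites are pairs (column, level). Two sites are concurrent when one of them can support the
other (same or adjacent column); `gap` is then the smallest possible level difference: `2` for a
support in the same column, `1` for a diagonal one. -/
abbrev Site := ℤ × ℕ

def Concurrent (p q : Site) : Prop := p.1 = q.1 ∨ p.1 + 1 = q.1 ∨ q.1 + 1 = p.1

def gap (p q : Site) : ℕ := if p.1 = q.1 then 2 else 1

lemma Concurrent.symm {p q : Site} (h : Concurrent p q) : Concurrent q p := by
  unfold Concurrent at *; omega

lemma concurrent_of_fst_eq {p q : Site} (h : p.1 = q.1) : Concurrent p q := Or.inl h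

lemma gap_of_fst_ne {p q : Site} (h : p.1 ≠ q.1) : gap p q = 1 := if_neg h

lemma one_le_gap (p q : Site) : 1 ≤ gap p q := by unfold gap; split <;> omega

/-- The support condition of `IsTriAnimal`. -/
def Supported (T : Finset Site) (x : Site) : Prop :=
  (x.1 - 1, x.2 - 1) ∈ T ∨ (x.1 + 1, x.2 - 1) ∈ T ∨ (2 ≤ x.2 ∧ (x.1, x.2 - 2) ∈ T)

lemma Supported.mono {T T' : Finset Site} {x : Site} (h : Supported T x) (hT : T ⊆ T') :
    Supported T' x := by
  rcases h with h | h | ⟨h2, h⟩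
  exacts [Or.inl (hT h), Or.inr (Or.inl (hT h)), Or.inr (Or.inr ⟨h2, hT h⟩)]

lemma supported_iff {T : Finset Site} {x : Site} (hx : 1 ≤ x.2) :
    Supported T x ↔ ∃ s ∈ T, Concurrent s x ∧ s.2 + gap s x = x.2 := by
  obtain ⟨a, l⟩ := x
  dsimp only at hx
  constructor
  · rintro (h | h | ⟨h2, h⟩)
    · exact ⟨_, h, Or.inr (Or.inl (by simp)), by rw [gap_of_fst_ne (by simp)]; simp; omega⟩
    · exact ⟨_, h, Or.inr (Or.inr (by simp)), by rw [gap_of_fst_ne (by simp)]; simp; omega⟩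
    · exact ⟨_, h, Or.inl rfl, by simp [gap]; omega⟩
  · rintro ⟨⟨b, n⟩, hs, hc, hgap⟩
    unfold Concurrent at hc
    dsimp only at hc hgap
    rcases hc with rfl | rfl | rfl
    · simp only [gap, if_pos] at hgap
      exact Or.inr (Or.inr ⟨by omega, by convert hs using 3; omega⟩)
    · rw [gap_of_fst_ne (by simp)] at hgap
      exact Or.inl (by convert hs using 2 <;> simp; omega)
    · rw [gap_of_fst_ne (by simp)] at hgap
      exact Or.inr (Or.inl (by convert hs using 2; omega))

namespace IsTriAnimal

variable {Q : Set ℤ} {S : Finset ℤ} {A : Finset Site}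

lemma fst_mem (hA : IsTriAnimal Q S A) {x : Site} (hx : x ∈ A) : x.1 ∈ Q := hA.1 x hx

lemma mk_zero_mem (hA : IsTriAnimal Q S A) {q : ℤ} (hq : q ∈ S) : (q, 0) ∈ A :=
  (hA.2.1 q).2 hq

lemma origin_mem (hA : IsTriAnimal Q {0} A) : ((0 : ℤ), 0) ∈ A :=
  hA.mk_zero_mem (Finset.mem_singleton_self 0)

lemma mem_source (hA : IsTriAnimal Q S A) {x : Site} (hx : x ∈ A) (h0 : x.2 = 0) : x.1 ∈ S :=
  (hA.2.1 x.1).1 (by rwa [← h0])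

lemma exists_support (hA : IsTriAnimal Q S A) {x : Site} (hx : x ∈ A) (h1 : 1 ≤ x.2) :
    ∃ s ∈ A, Concurrent s x ∧ s.2 + gap s x = x.2 :=
  (supported_iff h1).1 (hA.2.2 x hx h1)

lemma induction (hA : IsTriAnimal Q S A) {P : Site → Prop} (source : ∀ q ∈ S, P (q, 0))
    (step : ∀ s ∈ A, ∀ x ∈ A, Concurrent s x → s.2 + gap s x = x.2 → P s → P x) :
    ∀ x ∈ A, P x := by
  intro x hx
  induction hn : x.2 using Nat.strong_induction_on generalizing x with
  | _ n ih =>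
    rcases Nat.eq_zero_or_pos n with rfl | hpos
    · obtain ⟨a, l⟩ := x
      obtain rfl : l = 0 := hn
      exact source a (hA.mem_source hx rfl)
    · obtain ⟨s, hs, hc, hgap⟩ := hA.exists_support hx (hn ▸ hpos)
      exact step s hs x hx hc hgap (ih s.2 (by have := one_le_gap s x; omega) s hs rfl)

lemma eq_empty (hA : IsTriAnimal Q ∅ A) : A = ∅ :=
  Finset.eq_empty_of_forall_notMem
    (hA.induction (P := fun _ => False) (by simp) fun _ _ _ _ _ _ h => h)

lemma even_add_sub {e : ℤ} (hA : IsTriAnimal Q S A) (hS : ∀ s ∈ S, Even (s - e)) :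
    ∀ x ∈ A, Even (x.1 + x.2 - e) := by
  refine hA.induction (by simpa using hS) fun s _ x _ hc hgap hs => ?_
  rw [Int.even_iff] at hs ⊢
  unfold Concurrent at hc
  unfold gap at hgap
  split at hgap <;> omega

section Parity

variable {e : ℤ} (hA : IsTriAnimal Q S A) (hS : ∀ s ∈ S, Even (s - e))
include hA hS

lemma add_gap_le {s x : Site} (hs : s ∈ A) (hx : x ∈ A) (hlt : s.2 < x.2) :
    s.2 + gap s x ≤ x.2 := by
  have h1 := Int.even_iff.1 (hA.even_add_sub hS x hx)
  have h2 := Int.even_iff.1 (hA.even_add_sub hS s hs)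
  unfold gap
  split <;> omega

lemma eq_of_concurrent {s x : Site} (hs : s ∈ A) (hx : x ∈ A) (hc : Concurrent s x)
    (h : s.2 = x.2) : s = x := by
  have h1 := Int.even_iff.1 (hA.even_add_sub hS x hx)
  have h2 := Int.even_iff.1 (hA.even_add_sub hS s hs)
  unfold Concurrent at hc
  exact Prod.ext (by omega) h

end Parity

lemma snd_le_two_mul_card (hA : IsTriAnimal Q S A) : ∀ x ∈ A, x.2 ≤ 2 * A.card := by
  suffices h : ∀ x ∈ A, x.2 ≤ 2 * (A.filter (·.2 < x.2)).card from
    fun x hx => (h x hx).trans (by gcongr; exact Finset.filter_subset _ _)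
  refine hA.induction (by simp) fun s hs x _ _ hgap ih => ?_
  have hsub : insert s (A.filter (·.2 < s.2)) ⊆ A.filter (·.2 < x.2) := by
    intro y hy
    rcases Finset.mem_insert.1 hy with rfl | hy
    · exact Finset.mem_filter.2 ⟨hs, by have := one_le_gap y x; omega⟩
    · rw [Finset.mem_filter] at hy ⊢
      exact ⟨hy.1, by have := one_le_gap s x; omega⟩
  have hcard := Finset.card_le_card hsub
  rw [Finset.card_insert_of_notMem (by simp)] at hcard
  have : gap s x ≤ 2 := by unfold gap; split <;> omega
  omega

lemma exists_source_near (hA : IsTriAnimal Q S A) :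
    ∀ x ∈ A, ∃ s ∈ S, s - x.2 ≤ x.1 ∧ x.1 ≤ s + x.2 := by
  refine hA.induction (fun q hq => ⟨q, hq, by simp⟩) fun s _ x _ hc hgap ⟨σ, hσ, h⟩ => ?_
  refine ⟨σ, hσ, ?_⟩
  unfold Concurrent at hc
  have := one_le_gap s x
  omega

end IsTriAnimal

lemma finite_setOf_isTriAnimal (Q : Set ℤ) (S : Finset ℤ) (n : ℕ) :
    {A : Finset Site | IsTriAnimal Q S A ∧ A.card = n}.Finite := by
  obtain ⟨a, ha⟩ := S.bddBelow
  obtain ⟨b, hb⟩ := S.bddAbove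
  refine (Finset.Icc (a - 2 * n) (b + 2 * n) ×ˢ
    Finset.range (2 * n + 1)).powerset.finite_toSet.subset ?_
  rintro A ⟨hA, rfl⟩
  rw [Finset.mem_coe, Finset.mem_powerset]
  intro x hx
  obtain ⟨s, hs, h⟩ := hA.exists_source_near x hx
  have := hA.snd_le_two_mul_card x hx
  have := ha hs
  have := hb hs
  simp only [Finset.mem_product, Finset.mem_Icc, Finset.mem_range]
  omega

lemma finite_setOf_of_imp_isTriAnimal {Q : Set ℤ} {S : Finset ℤ} {C : Finset Site → Prop}
    (hC : ∀ A, C A → IsTriAnimal Q S A) (n : ℕ) :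
    {A : Finset Site | C A ∧ A.card = n}.Finite :=
  (finite_setOf_isTriAnimal Q S n).subset fun A h => ⟨hC A h.1, h.2⟩

lemma isTriAnimal_Ici_iff {S : Finset ℤ} {A : Finset Site} {c d : ℤ} (h : c ≤ d) :
    IsTriAnimal (Ici d) S A ↔ IsTriAnimal (Ici c) S A ∧ ∀ p ∈ A, d ≤ p.1 :=
  ⟨fun hA => ⟨⟨fun _ hx => (hA.fst_mem hx).trans' h, hA.2⟩, fun _ hp => hA.fst_mem hp⟩,
    fun ⟨hA, hd⟩ => ⟨hd, hA.2⟩⟩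

/-- The level at which the site `p` of `B` comes to rest when the sites of `B` are dropped, in
order of level, onto `V`: just above the highest concurrent site already placed below it. -/
def dropLevel (V B : Finset Site) (p : Site) : ℕ :=
  max ((V.filter (Concurrent · p)).sup fun v => v.2 + gap v p)
    ((B.filter fun b => Concurrent b p ∧ b.2 < p.2).attach.sup
      fun b => dropLevel V B b.1 + gap b.1 p)
termination_by p.2
decreasing_by
  have hb := b.2
  rw [Finset.mem_filter] at hb
  exact hb.2.2

def stack (V B : Finset Site) : Finset Site :=
  V ∪ B.image fun b => (b.1, dropLevel V B b)

lemma stack_empty_left (B : Finset Site) :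
    stack ∅ B = B.image fun b => (b.1, dropLevel ∅ B b) :=
  Finset.empty_union _

section DropLevel

variable {V B : Finset Site} {p : Site}

lemma dropLevel_eq (V B : Finset Site) (p : Site) :
    dropLevel V B p = max ((V.filter (Concurrent · p)).sup fun v => v.2 + gap v p)
      ((B.filter fun b => Concurrent b p ∧ b.2 < p.2).attach.sup
        fun b => dropLevel V B b.1 + gap b.1 p) := by
  rw [dropLevel]

lemma add_gap_le_dropLevel {v : Site} (hv : v ∈ V) (hc : Concurrent v p) :
    v.2 + gap v p ≤ dropLevel V B p := by
  rw [dropLevel_eq]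
  exact le_max_of_le_left (Finset.le_sup (f := fun v => v.2 + gap v p)
    (Finset.mem_filter.2 ⟨hv, hc⟩))

lemma dropLevel_add_gap_le {b : Site} (hb : b ∈ B) (hc : Concurrent b p) (hlt : b.2 < p.2) :
    dropLevel V B b + gap b p ≤ dropLevel V B p := by
  rw [dropLevel_eq V B p]
  exact le_max_of_le_right (Finset.le_sup (f := fun b => dropLevel V B b.1 + gap b.1 p)
    (Finset.mem_attach (B.filter fun b => Concurrent b p ∧ b.2 < p.2)
      ⟨b, Finset.mem_filter.2 ⟨hb, hc, hlt⟩⟩))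

lemma dropLevel_lt {b : Site} (hb : b ∈ B) (hc : Concurrent b p) (hlt : b.2 < p.2) :
    dropLevel V B b < dropLevel V B p := by
  have := dropLevel_add_gap_le (V := V) hb hc hlt
  have := one_le_gap b p
  omega

lemma dropLevel_le {n : ℕ} (hV : ∀ v ∈ V, Concurrent v p → v.2 + gap v p ≤ n)
    (hB : ∀ b ∈ B, Concurrent b p → b.2 < p.2 → dropLevel V B b + gap b p ≤ n) :
    dropLevel V B p ≤ n := by
  rw [dropLevel_eq]
  refine max_le (Finset.sup_le fun v hv => ?_) (Finset.sup_le fun b _ => ?_)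
  · exact hV v (Finset.mem_filter.1 hv).1 (Finset.mem_filter.1 hv).2
  · obtain ⟨hb, hc, hlt⟩ := Finset.mem_filter.1 b.2
    exact hB b hb hc hlt

lemma exists_eq_dropLevel (h : 1 ≤ dropLevel V B p) :
    (∃ v ∈ V, Concurrent v p ∧ v.2 + gap v p = dropLevel V B p) ∨
      ∃ b ∈ B, Concurrent b p ∧ b.2 < p.2 ∧
        dropLevel V B b + gap b p = dropLevel V B p := by
  rw [dropLevel_eq] at h ⊢
  rcases max_choice ((V.filter (Concurrent · p)).sup fun v => v.2 + gap v p)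
      ((B.filter fun b => Concurrent b p ∧ b.2 < p.2).attach.sup
        fun b => dropLevel V B b.1 + gap b.1 p) with heq | heq <;> rw [heq] at h ⊢
  · obtain ⟨v, hv, hveq⟩ := Finset.exists_mem_eq_sup (V.filter (Concurrent · p))
      (Finset.nonempty_iff_ne_empty.2 fun h0 => by simp [h0] at h) fun v => v.2 + gap v p
    exact Or.inl ⟨v, (Finset.mem_filter.1 hv).1, (Finset.mem_filter.1 hv).2, hveq.symm⟩
  · obtain ⟨b, -, hbeq⟩ := Finset.exists_mem_eq_sup
      (B.filter fun b => Concurrent b p ∧ b.2 < p.2).attach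
      (Finset.nonempty_iff_ne_empty.2 fun h0 => by simp [h0] at h)
      fun b : {x // x ∈ B.filter fun y => Concurrent y p ∧ y.2 < p.2} =>
        dropLevel V B b.1 + gap b.1 p
    obtain ⟨hb, hc, hlt⟩ := Finset.mem_filter.1 b.2
    exact Or.inr ⟨b, hb, hc, hlt, hbeq.symm⟩

/-- Dropping recovers the levels of a configuration `W` lying tightly on `V ∪ W`, whatever
order-preserving relabelling `g` of its levels it starts from. -/
lemma dropLevel_image_eq {W : Finset Site} {g : Site → ℕ}
    (hg : ∀ w ∈ W, ∀ w' ∈ W, Concurrent w' w → (w'.2 < w.2 ↔ g w' < g w))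
    (hV : ∀ w ∈ W, ∀ v ∈ V, Concurrent v w → v.2 + gap v w ≤ w.2)
    (hW : ∀ w ∈ W, ∀ w' ∈ W, w'.2 < w.2 → w'.2 + gap w' w ≤ w.2)
    (hsupp : ∀ w ∈ W, 1 ≤ w.2 → Supported (V ∪ W) w) :
    ∀ w ∈ W, dropLevel V (W.image fun u => (u.1, g u)) (w.1, g w) = w.2 := by
  intro w hw
  induction hn : w.2 using Nat.strong_induction_on generalizing w with
  | _ n ih =>
    subst hn
    refine le_antisymm (dropLevel_le (fun v hv hc => hV w hw v hv hc) ?_) ?_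
    · rintro _ hb hc hlt
      obtain ⟨w', hw', rfl⟩ := Finset.mem_image.1 hb
      have hlt' := (hg w hw w' hw' hc).2 hlt
      rw [ih w'.2 hlt' w' hw' rfl]
      exact hW w hw w' hw' hlt'
    · rcases Nat.eq_zero_or_pos w.2 with h0 | h1
      · omega
      obtain ⟨s, hs, hc, hgap⟩ := (supported_iff h1).1 (hsupp w hw h1)
      have hlt : s.2 < w.2 := by have := one_le_gap s w; omega
      rcases Finset.mem_union.1 hs with hsV | hsW
      · have := add_gap_le_dropLevel (B := W.image fun u => (u.1, g u)) (p := (w.1, g w)) hsV hc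
        exact hgap ▸ this
      · have := dropLevel_add_gap_le (V := V) (p := (w.1, g w))
          (Finset.mem_image_of_mem (fun u => (u.1, g u)) hsW)
          hc ((hg w hw s hsW hc).1 hlt)
        rw [ih s.2 hlt s hsW rfl] at this
        exact hgap ▸ this

lemma stack_image_eq {W : Finset Site} {g : Site → ℕ}
    (hg : ∀ w ∈ W, ∀ w' ∈ W, Concurrent w' w → (w'.2 < w.2 ↔ g w' < g w))
    (hV : ∀ w ∈ W, ∀ v ∈ V, Concurrent v w → v.2 + gap v w ≤ w.2)
    (hW : ∀ w ∈ W, ∀ w' ∈ W, w'.2 < w.2 → w'.2 + gap w' w ≤ w.2)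
    (hsupp : ∀ w ∈ W, 1 ≤ w.2 → Supported (V ∪ W) w) :
    stack V (W.image fun u => (u.1, g u)) = V ∪ W := by
  rw [stack, Finset.image_image]
  congr 1
  conv_rhs => rw [← Finset.image_id (s := W)]
  exact Finset.image_congr fun w hw => by
    simp [dropLevel_image_eq hg hV hW hsupp w hw]

lemma dropLevel_lt_iff
    (hB : ∀ b ∈ B, ∀ b' ∈ B, Concurrent b' b → b'.2 = b.2 → b' = b)
    {b b' : Site} (hb : b ∈ B) (hb' : b' ∈ B) (hc : Concurrent b' b) :
    b'.2 < b.2 ↔ dropLevel V B b' < dropLevel V B b := by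
  refine ⟨dropLevel_lt hb' hc, fun h => ?_⟩
  rcases lt_trichotomy b'.2 b.2 with hlt | heq | hgt
  · exact hlt
  · rw [hB b hb b' hb' hc heq] at h
    exact absurd h (lt_irrefl _)
  · exact absurd (dropLevel_lt (V := V) hb hc.symm hgt) h.not_gt

lemma dropLevel_injOn : Set.InjOn (fun b => (b.1, dropLevel V B b)) B := by
  intro b hb b' hb' h
  simp only [Prod.mk.injEq] at h
  have hc : Concurrent b b' := concurrent_of_fst_eq h.1
  rcases lt_trichotomy b.2 b'.2 with hlt | heq | hgt
  · exact absurd h.2 (dropLevel_lt hb hc hlt).ne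
  · exact Prod.ext h.1 heq
  · exact absurd h.2 (dropLevel_lt hb' hc.symm hgt).ne'

lemma disjoint_image_dropLevel : Disjoint V (B.image fun b => (b.1, dropLevel V B b)) := by
  refine Finset.disjoint_left.2 fun v hv hmem => ?_
  obtain ⟨b, -, rfl⟩ := Finset.mem_image.1 hmem
  have := add_gap_le_dropLevel (B := B) (p := b) hv (concurrent_of_fst_eq rfl)
  have := one_le_gap (b.1, dropLevel V B b) b
  omega

lemma card_stack : (stack V B).card = V.card + B.card := by
  rw [stack, Finset.card_union_of_disjoint disjoint_image_dropLevel,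
    Finset.card_image_of_injOn dropLevel_injOn]

lemma stack_supported {b : Site} (h : 1 ≤ dropLevel V B b) :
    Supported (stack V B) (b.1, dropLevel V B b) := by
  rw [supported_iff h]
  rcases exists_eq_dropLevel h with ⟨v, hv, hc, heq⟩ | ⟨b', hb', hc, hlt, heq⟩
  · exact ⟨v, Finset.mem_union_left _ hv, hc, heq⟩
  · exact ⟨(b'.1, dropLevel V B b'), Finset.mem_union_right _ (Finset.mem_image_of_mem _ hb'),
      hc, heq⟩

end DropLevel

def Climb (A : Finset Site) (p q : Site) : Prop :=
  p ∈ A ∧ q ∈ A ∧ Concurrent p q ∧ p.2 < q.2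

def pyramid (A : Finset Site) (m : Site) : Finset Site :=
  A.filter (Relation.ReflTransGen (Climb A) m)

def TouchesColumn (c : ℤ) (A : Finset Site) : Prop := ∃ l, (c, l) ∈ A

/-- The lowest site of `A` in column `0`; it is `(0, 0)` if there is none. -/
def wallBase (A : Finset Site) : Site := (0, sInf {l | ((0 : ℤ), l) ∈ A})

section Pyramid

variable {A V : Finset Site} {m p : Site}

lemma mem_pyramid : p ∈ pyramid A m ↔ p ∈ A ∧ Relation.ReflTransGen (Climb A) m p :=
  Finset.mem_filter

lemma self_mem_pyramid (hm : m ∈ A) : m ∈ pyramid A m :=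
  mem_pyramid.2 ⟨hm, .refl⟩

lemma mem_pyramid_of_climb {q : Site} (hp : p ∈ pyramid A m) (h : Climb A p q) :
    q ∈ pyramid A m :=
  mem_pyramid.2 ⟨h.2.1, (mem_pyramid.1 hp).2.tail h⟩

lemma eq_or_lt_of_mem_pyramid (hp : p ∈ pyramid A m) : p = m ∨ m.2 < p.2 := by
  obtain ⟨-, h⟩ := mem_pyramid.1 hp
  clear hp
  induction h with
  | refl => exact Or.inl rfl
  | tail _ hstep ih => exact Or.inr (by rcases ih with rfl | h <;> have := hstep.2.2.2 <;> omega)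

lemma pyramid_subset : pyramid A m ⊆ A := Finset.filter_subset _ _

lemma supported_sdiff_pyramid {x : Site} (hx : x ∈ A \ pyramid A m) (h1 : 1 ≤ x.2)
    (h : Supported A x) : Supported (A \ pyramid A m) x := by
  obtain ⟨hxA, hxP⟩ := Finset.mem_sdiff.1 hx
  obtain ⟨s, hs, hc, hgap⟩ := (supported_iff h1).1 h
  refine (supported_iff h1).2 ⟨s, Finset.mem_sdiff.2 ⟨hs, fun hsP => hxP ?_⟩, hc, hgap⟩
  exact mem_pyramid_of_climb hsP ⟨hs, hxA, hc, by have := one_le_gap s x; omega⟩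

lemma dropLevel_pyramid_self : dropLevel ∅ (pyramid A m) m = 0 :=
  Nat.eq_zero_of_le_zero <| dropLevel_le (by simp) fun b hb _ hlt => by
    rcases eq_or_lt_of_mem_pyramid hb with rfl | h <;> omega

lemma one_le_dropLevel_pyramid (hp : p ∈ pyramid A m) (hne : p ≠ m) :
    1 ≤ dropLevel V (pyramid A m) p := by
  obtain ⟨hpA, hchain⟩ := mem_pyramid.1 hp
  obtain rfl | ⟨s, hs, hstep⟩ := hchain.cases_tail
  · exact absurd rfl hne
  have hsP : s ∈ pyramid A m := mem_pyramid.2 ⟨hstep.1, hs⟩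
  exact (dropLevel_lt (V := V) hsP hstep.2.2.1 hstep.2.2.2).trans_le' (Nat.zero_le _)

lemma wallBase_mem (ht : TouchesColumn 0 A) : wallBase A ∈ A := Nat.sInf_mem ht

lemma wallBase_snd_le {l : ℕ} (h : ((0 : ℤ), l) ∈ A) : (wallBase A).2 ≤ l := Nat.sInf_le h

lemma mem_pyramid_wallBase {l : ℕ} (h : ((0 : ℤ), l) ∈ A) :
    ((0 : ℤ), l) ∈ pyramid A (wallBase A) := by
  rcases (wallBase_snd_le h).eq_or_lt with heq | hlt
  · have : wallBase A = ((0 : ℤ), l) := Prod.ext rfl heq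
    exact this ▸ self_mem_pyramid (this ▸ h)
  · exact mem_pyramid.2 ⟨h, .single ⟨wallBase_mem ⟨l, h⟩, h, Or.inl rfl, hlt⟩⟩

end Pyramid

section Extraction

variable {S : Finset ℤ} {A : Finset Site} {e : ℤ}

lemma IsTriAnimal.snd_lt_of_concurrent_notMem_pyramid (hA : IsTriAnimal (Ici 0) S A)
    (hS : ∀ s ∈ S, Even (s - e)) {m w v : Site} (hw : w ∈ pyramid A m)
    (hv : v ∈ A \ pyramid A m)
    (hc : Concurrent v w) : v.2 < w.2 := by
  obtain ⟨hvA, hvP⟩ := Finset.mem_sdiff.1 hv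
  have hwA := pyramid_subset hw
  rcases lt_trichotomy v.2 w.2 with hlt | heq | hgt
  · exact hlt
  · exact absurd (hA.eq_of_concurrent hS hvA hwA hc heq ▸ hw) hvP
  · exact absurd (mem_pyramid_of_climb hw ⟨hwA, hvA, hc.symm, hgt⟩) hvP

lemma IsTriAnimal.sdiff_pyramid_wallBase (hA : IsTriAnimal (Ici 0) S A) :
    IsTriAnimal (Ici 1) (S.erase 0) (A \ pyramid A (wallBase A)) := by
  refine ⟨fun x hx => ?_, fun x => ?_, fun x hx h1 => ?_⟩
  · obtain ⟨hxA, hxP⟩ := Finset.mem_sdiff.1 hx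
    have h0 : (0 : ℤ) ≤ x.1 := hA.fst_mem hxA
    by_contra hx1
    have : x = ((0 : ℤ), x.2) := Prod.ext (by simp at hx1; omega) rfl
    rw [this] at hxA hxP
    exact hxP (mem_pyramid_wallBase hxA)
  · rw [Finset.mem_sdiff, Finset.mem_erase, hA.2.1]
    refine ⟨fun ⟨hxS, hxP⟩ => ⟨fun hx0 => hxP ?_, hxS⟩,
      fun ⟨hx0, hxS⟩ => ⟨hxS, fun hxP => ?_⟩⟩
    · exact hx0 ▸ mem_pyramid_wallBase ((hA.2.1 0).2 (hx0 ▸ hxS))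
    · rcases eq_or_lt_of_mem_pyramid hxP with h | h
      · exact hx0 (congrArg Prod.fst h)
      · exact absurd h (Nat.not_lt_zero _)
  · exact supported_sdiff_pyramid hx h1 (hA.2.2 x (Finset.mem_sdiff.1 hx).1 h1)

lemma IsTriAnimal.two_le_of_mem_sdiff_pyramid_wallBase (hA : IsTriAnimal (Ici 0) S A)
    (hS : ∀ s ∈ S, Even (s - e)) (h0 : 0 ∈ S) {x : Site}
    (hx : x ∈ A \ pyramid A (wallBase A)) :
    2 ≤ x.1 := by
  have h1 : 1 ≤ x.1 := hA.sdiff_pyramid_wallBase.fst_mem hx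
  obtain ⟨hxA, hxP⟩ := Finset.mem_sdiff.1 hx
  by_contra! hx1
  rcases Nat.eq_zero_or_pos x.2 with hl | hl
  · have := Int.even_iff.1 (hS _ (hA.mem_source hxA hl))
    have := Int.even_iff.1 (hS _ h0)
    omega
  · have h00 : ((0 : ℤ), 0) ∈ A := (hA.2.1 0).2 h0
    exact hxP (mem_pyramid_of_climb (mem_pyramid_wallBase h00)
      ⟨h00, hxA, Or.inr (Or.inl (by simp; omega)), hl⟩)

lemma IsTriAnimal.touchesColumn_one_sdiff_pyramid_wallBase (hA : IsTriAnimal (Ici 0) S A)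
    (h0 : 0 ∉ S) (ht : TouchesColumn 0 A) :
    TouchesColumn 1 (A \ pyramid A (wallBase A)) := by
  have hm := wallBase_mem ht
  have hm1 : 1 ≤ (wallBase A).2 :=
    Nat.one_le_iff_ne_zero.2 fun hl => h0 (hA.mem_source hm hl)
  obtain ⟨⟨a, l⟩, hs, hc, hgap⟩ := hA.exists_support hm hm1
  have hlt : l < (wallBase A).2 := by have := one_le_gap (a, l) (wallBase A); simp at hgap; omega
  have ha : (0 : ℤ) ≤ a := hA.fst_mem hs
  obtain rfl | rfl : a = 0 ∨ a = 1 := by simp [Concurrent, wallBase] at hc; omega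
  · exact absurd (wallBase_snd_le hs) hlt.not_ge
  · refine ⟨l, Finset.mem_sdiff.2 ⟨hs, fun hsP => ?_⟩⟩
    rcases eq_or_lt_of_mem_pyramid hsP with h | h
    · simp [wallBase] at h
    · exact absurd h hlt.not_gt

lemma IsTriAnimal.stack_empty_pyramid_wallBase (hA : IsTriAnimal (Ici 0) S A) (ht : TouchesColumn 0 A) :
    IsTriAnimal (Ici 0) {0} (stack ∅ (pyramid A (wallBase A))) := by
  have hm := wallBase_mem ht
  refine ⟨fun x hx => ?_, fun x => ⟨fun hx => ?_, fun hx => ?_⟩, fun x hx h1 => ?_⟩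
  all_goals rw [stack_empty_left] at *
  · obtain ⟨u, hu, rfl⟩ := Finset.mem_image.1 hx
    exact hA.fst_mem (x := u) (pyramid_subset hu)
  · obtain ⟨u, hu, hux⟩ := Finset.mem_image.1 hx
    simp only [Prod.mk.injEq] at hux
    by_cases hum : u = wallBase A
    · simp [← hux.1, hum, wallBase]
    · exact absurd hux.2 (Nat.one_le_iff_ne_zero.1 (one_le_dropLevel_pyramid (V := ∅) hu hum))
  · refine Finset.mem_image.2 ⟨wallBase A, self_mem_pyramid hm, ?_⟩
    rw [dropLevel_pyramid_self, Finset.mem_singleton.1 hx]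
    rfl
  · obtain ⟨u, -, rfl⟩ := Finset.mem_image.1 hx
    rw [← stack_empty_left]
    exact stack_supported h1

lemma card_sdiff_pyramid_add_card_stack {m : Site} :
    (A \ pyramid A m).card + (stack ∅ (pyramid A m)).card = A.card := by
  rw [card_stack, Finset.card_empty, zero_add,
    Finset.card_sdiff_add_card_eq_card pyramid_subset]

lemma IsTriAnimal.stack_sdiff_pyramid_stack_empty_pyramid (hA : IsTriAnimal (Ici 0) S A)
    (hS : ∀ s ∈ S, Even (s - e)) {m : Site} :
    stack (A \ pyramid A m) (stack ∅ (pyramid A m)) = A := by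
  rw [stack_empty_left, stack_image_eq, Finset.sdiff_union_of_subset pyramid_subset]
  · exact fun w hw w' hw' hc => dropLevel_lt_iff
      (fun b hb b' hb' => hA.eq_of_concurrent hS (pyramid_subset hb') (pyramid_subset hb))
      hw hw' hc
  · exact fun w hw v hv hc => hA.add_gap_le hS (Finset.mem_sdiff.1 hv).1 (pyramid_subset hw)
      (hA.snd_lt_of_concurrent_notMem_pyramid hS hw hv hc)
  · exact fun w hw w' hw' => hA.add_gap_le hS (pyramid_subset hw') (pyramid_subset hw)
  · rw [Finset.sdiff_union_of_subset pyramid_subset]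
    exact fun w hw => hA.2.2 w (pyramid_subset hw)

end Extraction

section Composition

variable {Q : Set ℤ} {S : Finset ℤ} {V B : Finset Site}

lemma mem_stack {x : Site} :
    x ∈ stack V B ↔ x ∈ V ∨ ∃ b ∈ B, (b.1, dropLevel V B b) = x := by
  rw [stack, Finset.mem_union, Finset.mem_image]

lemma IsTriAnimal.reflTransGen_climb {q : ℤ} (hB : IsTriAnimal Q {q} B) :
    ∀ b ∈ B, Relation.ReflTransGen (Climb B) (q, 0) b :=
  hB.induction (fun _ h => Finset.mem_singleton.1 h ▸ .refl) fun s hs x hx hc hgap ih =>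
    ih.tail ⟨hs, hx, hc, by have := one_le_gap s x; omega⟩

lemma IsTriAnimal.one_le_dropLevel {T : Finset ℤ} (hB : IsTriAnimal Q T B) {b : Site}
    (hb : b ∈ B) (h1 : 1 ≤ b.2) : 1 ≤ dropLevel V B b := by
  obtain ⟨s, hs, hc, hgap⟩ := hB.exists_support hb h1
  exact (dropLevel_lt hs hc (by have := one_le_gap s b; omega)).trans_le' (Nat.zero_le _)

lemma IsTriAnimal.dropLevel_origin_le (hB : IsTriAnimal Q {0} B) {b : Site}
    (h0 : b.1 = 0) : dropLevel V B (0, 0) ≤ dropLevel V B b := by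
  rcases Nat.eq_zero_or_pos b.2 with hl | hl
  · rw [show b = (0, 0) from Prod.ext h0 hl]
  · exact (dropLevel_lt hB.origin_mem (concurrent_of_fst_eq h0.symm) hl).le

lemma dropLevel_origin_eq_zero (h2 : ∀ p ∈ V, 2 ≤ p.1) : dropLevel V B (0, 0) = 0 :=
  Nat.eq_zero_of_le_zero <| dropLevel_le
    (fun v hv hc => by have := h2 v hv; simp [Concurrent] at hc; omega)
    fun _ _ _ hlt => absurd hlt (Nat.not_lt_zero _)

lemma one_le_dropLevel_origin (h : TouchesColumn 1 V) : 1 ≤ dropLevel V B (0, 0) := by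
  obtain ⟨l, hl⟩ := h
  exact (add_gap_le_dropLevel hl (Or.inr (Or.inr (by simp)))).trans' (by simp [gap])

lemma isTriAnimal_stack (hV : IsTriAnimal (Ici 1) (S.erase 0) V) (hB : IsTriAnimal (Ici 0) {0} B)
    (h2 : 0 ∈ S → ∀ p ∈ V, 2 ≤ p.1) (h1 : 0 ∉ S → TouchesColumn 1 V) :
    IsTriAnimal (Ici 0) S (stack V B) := by
  have h00 : ((0 : ℤ), 0) ∈ B := hB.origin_mem
  refine ⟨fun x hx => ?_, fun x => ⟨fun hx => ?_, fun hx => ?_⟩, fun x hx hl => ?_⟩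
  · rcases mem_stack.1 hx with hxV | ⟨b, hb, rfl⟩
    · exact Set.mem_Ici.2 ((Set.mem_Ici.1 (hV.fst_mem hxV)).trans' zero_le_one)
    · exact hB.fst_mem (x := b) hb
  · rcases mem_stack.1 hx with hxV | ⟨b, hb, hbx⟩
    · exact Finset.mem_of_mem_erase ((hV.2.1 x).1 hxV)
    · simp only [Prod.mk.injEq] at hbx
      have hb0 : b.2 = 0 := by
        by_contra h
        exact absurd hbx.2 (Nat.one_le_iff_ne_zero.1 (hB.one_le_dropLevel hb (by omega)))
      have hb1 : b.1 = 0 := by simpa using hB.mem_source hb hb0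
      by_contra hxS
      obtain rfl : x = 0 := hbx.1 ▸ hb1
      have := one_le_dropLevel_origin (B := B) (h1 hxS)
      rw [show b = (0, 0) from Prod.ext hb1 hb0] at hbx
      omega
  · by_cases hx0 : x = 0
    · subst hx0
      exact mem_stack.2 (Or.inr ⟨(0, 0), h00, by rw [dropLevel_origin_eq_zero (h2 hx)]⟩)
    · exact Finset.mem_union_left _ ((hV.2.1 x).2 (Finset.mem_erase.2 ⟨hx0, hx⟩))
  · rcases mem_stack.1 hx with hxV | ⟨b, -, rfl⟩
    · exact Supported.mono (hV.2.2 x hxV hl) Finset.subset_union_left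
    · exact stack_supported hl

lemma IsTriAnimal.touchesColumn_zero_stack (hB : IsTriAnimal Q {0} B) :
    TouchesColumn 0 (stack V B) :=
  ⟨_, Finset.mem_union_right _ (Finset.mem_image_of_mem _ hB.origin_mem)⟩

section

variable (hV : ∀ p ∈ V, 1 ≤ p.1) (hB : IsTriAnimal (Ici 0) {0} B)
include hV hB

lemma wallBase_stack : wallBase (stack V B) = (0, dropLevel V B (0, 0)) := by
  have hmem : ((0 : ℤ), dropLevel V B (0, 0)) ∈ stack V B :=
    Finset.mem_union_right _ (Finset.mem_image_of_mem _ hB.origin_mem)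
  refine Prod.ext rfl (le_antisymm (wallBase_snd_le hmem) ?_)
  rcases mem_stack.1 (wallBase_mem ⟨_, hmem⟩) with hw | ⟨b, -, hbw⟩
  · exact absurd (hV _ hw) (by simp [wallBase])
  · simp only [wallBase, Prod.mk.injEq] at hbw
    change _ ≤ sInf _
    rw [← hbw.2]
    exact hB.dropLevel_origin_le hbw.1

lemma pyramid_wallBase_stack :
    pyramid (stack V B) (wallBase (stack V B)) = B.image fun b => (b.1, dropLevel V B b) := by
  rw [wallBase_stack hV hB]
  ext x
  refine ⟨fun hx => ?_, fun hx => ?_⟩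
  · obtain ⟨-, hchain⟩ := mem_pyramid.1 hx
    clear hx
    induction hchain with
    | refl => exact Finset.mem_image_of_mem _ (hB.origin_mem)
    | tail _ hstep ih =>
      obtain ⟨b, -, rfl⟩ := Finset.mem_image.1 ih
      obtain ⟨-, hy, hc, hlt⟩ := hstep
      rcases mem_stack.1 hy with hyV | hyB
      · have := add_gap_le_dropLevel (B := B) hyV (show Concurrent _ b from hc.symm)
        simp only at hlt
        omega
      · exact Finset.mem_image.2 hyB
  · obtain ⟨b, hb, rfl⟩ := Finset.mem_image.1 hx
    refine mem_pyramid.2 ⟨Finset.mem_union_right _ hx, ?_⟩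
    refine Relation.ReflTransGen.lift (fun b => (b.1, dropLevel V B b)) ?_ _ _
      (hB.reflTransGen_climb b hb)
    rintro a c ⟨ha, hc, hac, hlt⟩
    exact ⟨Finset.mem_union_right _ (Finset.mem_image_of_mem _ ha),
      Finset.mem_union_right _ (Finset.mem_image_of_mem _ hc), hac, dropLevel_lt ha hac hlt⟩

lemma stack_sdiff_pyramid_wallBase_stack :
    stack V B \ pyramid (stack V B) (wallBase (stack V B)) = V := by
  rw [pyramid_wallBase_stack hV hB, stack, Finset.union_sdiff_cancel_right disjoint_image_dropLevel]

lemma stack_empty_pyramid_wallBase_stack :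
    stack ∅ (pyramid (stack V B) (wallBase (stack V B))) = B := by
  have hS : ∀ s ∈ ({0} : Finset ℤ), Even (s - 0) := by simp
  rw [pyramid_wallBase_stack hV hB, stack_image_eq, Finset.empty_union]
  · exact fun w hw w' hw' hc => dropLevel_lt_iff
      (fun b hb b' hb' => hB.eq_of_concurrent hS hb' hb) hw hw' hc
  · simp
  · exact fun w hw w' hw' => hB.add_gap_le hS hw' hw
  · rw [Finset.empty_union]
    exact fun w hw => hB.2.2 w hw

end

end Composition

section CardGF

variable {α β γ : Type*}

def cardGF (C : Finset α → Prop) : PowerSeries ℤ :=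
  PowerSeries.mk fun n => ({A : Finset α | C A ∧ A.card = n}.ncard : ℤ)

lemma triGF_eq_cardGF (Q : Set ℤ) (S : Finset ℤ) : triGF Q S = cardGF (IsTriAnimal Q S) := rfl

lemma coeff_cardGF (C : Finset α → Prop) (n : ℕ) :
    PowerSeries.coeff n (cardGF C) = ({A : Finset α | C A ∧ A.card = n}.ncard : ℤ) :=
  PowerSeries.coeff_mk _ _

lemma cardGF_congr {C C' : Finset α → Prop} (h : ∀ A, C A ↔ C' A) : cardGF C = cardGF C' :=
  congrArg cardGF (funext fun A => propext (h A))

lemma cardGF_comp_finsetCongr (e : α ≃ β) (C : Finset β → Prop) :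
    cardGF (fun A => C (e.finsetCongr A)) = cardGF C := by
  ext n
  rw [coeff_cardGF, coeff_cardGF]
  have : {A | C (e.finsetCongr A) ∧ A.card = n} =
      e.finsetCongr ⁻¹' {B | C B ∧ B.card = n} := by
    ext A
    simp [Equiv.finsetCongr_apply]
  rw [this, Set.ncard_preimage_of_injective_subset_range e.finsetCongr.injective
    (by simp [e.finsetCongr.surjective.range_eq])]

lemma cardGF_eq_add {C : Finset α → Prop} (P : Finset α → Prop)
    (hfin : ∀ n, {A | C A ∧ A.card = n}.Finite) :
    cardGF C = cardGF (fun A => C A ∧ P A) + cardGF (fun A => C A ∧ ¬ P A) := by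
  ext n
  rw [map_add, coeff_cardGF, coeff_cardGF, coeff_cardGF, ← Nat.cast_add,
    ← Set.ncard_union_eq ?_ ((hfin n).subset ?_) ((hfin n).subset ?_)]
  · congr 2
    ext A
    simp only [Set.mem_ofPred_eq, Set.mem_union]
    tauto
  · exact Set.disjoint_left.2 fun A h h' => h'.1.2 h.1.2
  all_goals exact fun A h => ⟨h.1.1, h.2⟩

lemma cardGF_eq_mul {C : Finset α → Prop} {C₁ : Finset β → Prop} {C₂ : Finset γ → Prop}
    (Φ : Finset α → Finset β × Finset γ) (Ψ : Finset β → Finset γ → Finset α)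
    (hΦ : ∀ A, C A → C₁ (Φ A).1 ∧ C₂ (Φ A).2 ∧
      (Φ A).1.card + (Φ A).2.card = A.card ∧ Ψ (Φ A).1 (Φ A).2 = A)
    (hΨ : ∀ V B, C₁ V → C₂ B → C (Ψ V B) ∧ Φ (Ψ V B) = (V, B))
    (hfin₁ : ∀ n, {V | C₁ V ∧ V.card = n}.Finite)
    (hfin₂ : ∀ n, {B | C₂ B ∧ B.card = n}.Finite) :
    cardGF C = cardGF C₁ * cardGF C₂ := by
  ext n
  rw [PowerSeries.coeff_mul, coeff_cardGF]
  have key : {A | C A ∧ A.card = n}.ncard = ((Finset.HasAntidiagonal.antidiagonal n).sigma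
      fun p => (hfin₁ p.1).toFinset ×ˢ (hfin₂ p.2).toFinset).card := by
    rw [← Set.ncard_coe_finset]
    refine Set.ncard_congr (fun A _ => ⟨((Φ A).1.card, (Φ A).2.card), Φ A⟩) ?_ ?_ ?_
    · rintro A ⟨hA, rfl⟩
      obtain ⟨h₁, h₂, hcard, -⟩ := hΦ A hA
      simp [h₁, h₂, hcard]
    · rintro A A' ⟨hA, -⟩ ⟨hA', -⟩ h
      rw [← (hΦ A hA).2.2.2, ← (hΦ A' hA').2.2.2, (Sigma.mk.inj_iff.1 h).2.eq]
    · rintro ⟨⟨i, j⟩, V, B⟩ h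
      simp only [Finset.coe_sigma, Set.mem_sigma_iff, Finset.mem_coe,
        Finset.HasAntidiagonal.mem_antidiagonal, Finset.mem_product, Set.Finite.mem_toFinset,
        Set.mem_ofPred_eq] at h
      obtain ⟨hij, ⟨hV, rfl⟩, hB, rfl⟩ := h
      obtain ⟨hC, hΦΨ⟩ := hΨ V B hV hB
      have hcard := (hΦ _ hC).2.2.1
      rw [hΦΨ] at hcard
      exact ⟨Ψ V B, ⟨hC, hcard.symm.trans hij⟩, by rw [hΦΨ]⟩
  rw [key, Finset.card_sigma, Nat.cast_sum]
  refine Finset.sum_congr rfl fun p _ => ?_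
  rw [Finset.card_product, Nat.cast_mul, coeff_cardGF, coeff_cardGF,
    Set.ncard_eq_toFinset_card _ (hfin₁ p.1), Set.ncard_eq_toFinset_card _ (hfin₂ p.2)]

end CardGF

section WallFactorization

variable {S : Finset ℤ} {e : ℤ}

/-- What is left of an animal with source `S` touching column `0` once its wall pyramid is
removed. -/
def IsWallRemainder (S : Finset ℤ) (V : Finset Site) : Prop :=
  IsTriAnimal (Ici 1) (S.erase 0) V ∧ (0 ∈ S → ∀ p ∈ V, 2 ≤ p.1) ∧
    (0 ∉ S → TouchesColumn 1 V)

theorem cardGF_touchesColumn_zero (hS : ∀ s ∈ S, Even (s - e)) :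
    cardGF (fun A => IsTriAnimal (Ici 0) S A ∧ TouchesColumn 0 A) =
      cardGF (IsWallRemainder S) * triGF (Ici 0) {0} := by
  refine cardGF_eq_mul (fun A => (A \ pyramid A (wallBase A), stack ∅ (pyramid A (wallBase A))))
    stack (fun A ⟨hA, ht⟩ => ⟨⟨hA.sdiff_pyramid_wallBase,
      fun h0 _ => hA.two_le_of_mem_sdiff_pyramid_wallBase hS h0,
      fun h0 => hA.touchesColumn_one_sdiff_pyramid_wallBase h0 ht⟩,
      hA.stack_empty_pyramid_wallBase ht, card_sdiff_pyramid_add_card_stack,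
      hA.stack_sdiff_pyramid_stack_empty_pyramid hS⟩)
    (fun V B ⟨hV, h2, h1⟩ hB => ?_)
    (finite_setOf_of_imp_isTriAnimal fun _ h => h.1) (finite_setOf_isTriAnimal _ _)
  have hV1 : ∀ p ∈ V, 1 ≤ p.1 := fun p hp => hV.fst_mem hp
  exact ⟨⟨isTriAnimal_stack hV hB h2 h1, hB.touchesColumn_zero_stack⟩,
    Prod.ext (stack_sdiff_pyramid_wallBase_stack hV1 hB)
      (stack_empty_pyramid_wallBase_stack hV1 hB)⟩

theorem cardGF_touchesColumn_zero_of_mem (hS : ∀ s ∈ S, Even (s - e)) (h0 : 0 ∈ S) :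
    cardGF (fun A => IsTriAnimal (Ici 0) S A ∧ TouchesColumn 0 A) =
      triGF (Ici 2) (S.erase 0) * triGF (Ici 0) {0} := by
  rw [cardGF_touchesColumn_zero hS, triGF_eq_cardGF]
  congr 1
  refine cardGF_congr fun V => ?_
  rw [IsWallRemainder, isTriAnimal_Ici_iff (show (1 : ℤ) ≤ 2 by norm_num)]
  tauto

theorem cardGF_touchesColumn_zero_of_notMem (hS : ∀ s ∈ S, Even (s - e)) (h0 : 0 ∉ S) :
    cardGF (fun A => IsTriAnimal (Ici 0) S A ∧ TouchesColumn 0 A) =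
      cardGF (fun V => IsTriAnimal (Ici 1) S V ∧ TouchesColumn 1 V) * triGF (Ici 0) {0} := by
  rw [cardGF_touchesColumn_zero hS]
  congr 1
  refine cardGF_congr fun V => ?_
  rw [IsWallRemainder, Finset.erase_eq_of_notMem h0]
  tauto

end WallFactorization

def columnShift (c : ℤ) : Site ≃ Site := (Equiv.addRight c).prodCongr (Equiv.refl ℕ)

section Translation

variable {Q : Set ℤ} {S : Finset ℤ} {A : Finset Site} {c : ℤ}

@[simp]
lemma columnShift_symm_apply (x : Site) : (columnShift c).symm x = (x.1 - c, x.2) := rfl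

lemma mem_finsetCongr_columnShift {x : Site} :
    x ∈ (columnShift c).finsetCongr A ↔ (x.1 - c, x.2) ∈ A := by
  rw [Equiv.finsetCongr_apply, Finset.mem_map_equiv, columnShift_symm_apply]

lemma supported_finsetCongr_columnShift {x : Site} :
    Supported ((columnShift c).finsetCongr A) (x.1 + c, x.2) ↔ Supported A x := by
  simp only [Supported, mem_finsetCongr_columnShift, sub_add_cancel, add_sub_right_comm _ c,
    add_right_comm _ c]

lemma isTriAnimal_columnShift_iff :
    IsTriAnimal Q (S.image (· + c)) ((columnShift c).finsetCongr A) ↔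
      IsTriAnimal ((· + c) ⁻¹' Q) S A := by
  have hmem (x : Site) : (x.1 + c, x.2) ∈ (columnShift c).finsetCongr A ↔ x ∈ A := by
    simp
  constructor
  · rintro ⟨hQ, hS, hsupp⟩
    refine ⟨fun x hx => hQ _ ((hmem x).2 hx), fun q => ?_, fun x hx hl => ?_⟩
    · rw [← hmem (q, 0), hS]
      simp
    · exact supported_finsetCongr_columnShift.1 (hsupp _ ((hmem x).2 hx) hl)
  · rintro ⟨hQ, hS, hsupp⟩
    refine ⟨fun x hx => ?_, fun q => ?_, fun x hx hl => ?_⟩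
    · simpa using hQ _ (mem_finsetCongr_columnShift.1 hx)
    · rw [mem_finsetCongr_columnShift, hS, Finset.mem_image]
      exact ⟨fun h => ⟨_, h, sub_add_cancel _ _⟩, fun ⟨s, hs, h⟩ => by
        rwa [← h, add_sub_cancel_right]⟩
    · have := supported_finsetCongr_columnShift (c := c).2
        (hsupp _ (mem_finsetCongr_columnShift.1 hx) hl)
      rwa [sub_add_cancel] at this

lemma touchesColumn_columnShift_iff :
    TouchesColumn c ((columnShift c).finsetCongr A) ↔ TouchesColumn 0 A := by
  simp [TouchesColumn]

lemma triGF_image_add (Q : Set ℤ) (S : Finset ℤ) (c : ℤ) :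
    triGF Q (S.image (· + c)) = triGF ((· + c) ⁻¹' Q) S := by
  rw [triGF_eq_cardGF, triGF_eq_cardGF, ← cardGF_comp_finsetCongr (columnShift c)]
  exact cardGF_congr fun A => isTriAnimal_columnShift_iff

lemma cardGF_touchesColumn_image_add (Q : Set ℤ) (S : Finset ℤ) (c : ℤ) :
    cardGF (fun A => IsTriAnimal Q (S.image (· + c)) A ∧ TouchesColumn c A) =
      cardGF (fun A => IsTriAnimal ((· + c) ⁻¹' Q) S A ∧ TouchesColumn 0 A) := by
  rw [← cardGF_comp_finsetCongr (columnShift c)]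
  exact cardGF_congr fun A => and_congr isTriAnimal_columnShift_iff touchesColumn_columnShift_iff

end Translation

/-- The compact source `C_{q,k} = {q, q + 2, …, q + 2k - 2}`. -/
def compactSource (q k : ℕ) : Finset ℤ :=
  (Finset.range k).image fun i : ℕ => (q : ℤ) + 2 * (i : ℤ)

local notation "𝒟" => triGF (Set.Ici 0) {0}

section CompactSource

variable {q k : ℕ}

lemma mem_compactSource {x : ℤ} :
    x ∈ compactSource q k ↔ ∃ i < k, (q : ℤ) + 2 * i = x := by
  simp [compactSource]

lemma even_sub_of_mem_compactSource : ∀ s ∈ compactSource q k, Even (s - q) := by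
  rintro s hs
  obtain ⟨i, -, rfl⟩ := mem_compactSource.1 hs
  exact ⟨i, by ring⟩

lemma compactSource_add (q k d : ℕ) :
    compactSource (q + d) k = (compactSource q k).image (· + (d : ℤ)) := by
  rw [compactSource, compactSource, Finset.image_image]
  exact Finset.image_congr fun i _ => by simp only [Function.comp_apply]; push_cast; ring

lemma zero_mem_compactSource_zero (hk : 1 ≤ k) : 0 ∈ compactSource 0 k :=
  mem_compactSource.2 ⟨0, hk, by simp⟩

lemma zero_notMem_compactSource_succ : 0 ∉ compactSource (q + 1) k := by
  rw [mem_compactSource]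
  omega

lemma compactSource_zero_succ_erase : (compactSource 0 (k + 1)).erase 0 = compactSource 2 k := by
  ext x
  simp only [Finset.mem_erase, mem_compactSource]
  constructor
  · rintro ⟨hx, i, hi, rfl⟩
    exact ⟨i - 1, by omega, by omega⟩
  · rintro ⟨i, hi, rfl⟩
    exact ⟨by omega, i + 1, by omega, by push_cast; ring⟩

end CompactSource

lemma triGF_empty (Q : Set ℤ) : triGF Q ∅ = 1 := by
  ext n
  rw [triGF_eq_cardGF, coeff_cardGF, PowerSeries.coeff_one]
  have hset :
      {A : Finset Site | IsTriAnimal Q ∅ A ∧ A.card = n} = {A | A = ∅ ∧ A.card = n} := by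
    ext A
    exact and_congr_left fun _ =>
      ⟨IsTriAnimal.eq_empty, fun h => h ▸ ⟨by simp, by simp, by simp⟩⟩
  rw [hset]
  rcases n with _ | n
  · simp
  · have : {A : Finset Site | A = ∅ ∧ A.card = n + 1} = ∅ :=
      Set.eq_empty_of_forall_notMem fun A ⟨hA, hcard⟩ => by simp [hA] at hcard
    simp [this]

lemma triGF_compactSource_zero (k : ℕ) : triGF (Ici 0) (compactSource 0 k) = 𝒟 ^ k := by
  induction k with
  | zero => simp [compactSource, triGF_empty]
  | succ k ih =>
    have hall : ∀ A, IsTriAnimal (Ici 0) (compactSource 0 (k + 1)) A ↔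
        IsTriAnimal (Ici 0) (compactSource 0 (k + 1)) A ∧ TouchesColumn 0 A := fun A =>
      ⟨fun hA => ⟨hA, 0, hA.mk_zero_mem (zero_mem_compactSource_zero (by omega))⟩, And.left⟩
    rw [triGF_eq_cardGF, cardGF_congr hall, cardGF_touchesColumn_zero_of_mem
      even_sub_of_mem_compactSource (zero_mem_compactSource_zero (by omega)),
      compactSource_zero_succ_erase, compactSource_add 0 k 2, triGF_image_add,
      preimage_add_const_Ici, Nat.cast_ofNat, sub_self, ih, pow_succ]

lemma cardGF_compactSource_touchesColumn_zero {k : ℕ} (hk : 1 ≤ k) (q : ℕ) :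
    cardGF (fun A => IsTriAnimal (Ici 0) (compactSource q k) A ∧ TouchesColumn 0 A) =
      𝒟 ^ (q + k) := by
  induction q with
  | zero =>
    rw [zero_add, ← triGF_compactSource_zero, triGF_eq_cardGF]
    exact cardGF_congr fun A =>
      ⟨And.left, fun hA => ⟨hA, 0, hA.mk_zero_mem (zero_mem_compactSource_zero hk)⟩⟩
  | succ q ih =>
    rw [cardGF_touchesColumn_zero_of_notMem even_sub_of_mem_compactSource
      zero_notMem_compactSource_succ, compactSource_add q k 1, Nat.cast_one,
      cardGF_touchesColumn_image_add, preimage_add_const_Ici, sub_self, ih]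
    ring

lemma triGF_compactSource_succ {k : ℕ} (hk : 1 ≤ k) (q : ℕ) :
    triGF (Ici 0) (compactSource (q + 1) k) =
      triGF (Ici 0) (compactSource q k) + 𝒟 ^ (q + 1 + k) := by
  have havoid : ∀ A, IsTriAnimal (Ici 0) (compactSource (q + 1) k) A ∧ ¬ TouchesColumn 0 A ↔
      IsTriAnimal (Ici 1) (compactSource (q + 1) k) A := fun A => by
    rw [isTriAnimal_Ici_iff zero_le_one, TouchesColumn, not_exists]
    refine and_congr_right fun hA => ⟨fun h p hp => ?_, fun h l hl => by simpa using h _ hl⟩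
    have : (0 : ℤ) ≤ p.1 := hA.fst_mem hp
    by_contra hp1
    have hp0 : p = ((0 : ℤ), p.2) := Prod.ext (by omega) rfl
    exact h p.2 (hp0 ▸ hp)
  rw [triGF_eq_cardGF, cardGF_eq_add (TouchesColumn 0) (finite_setOf_isTriAnimal _ _),
    cardGF_compactSource_touchesColumn_zero hk, add_comm, cardGF_congr havoid,
    ← triGF_eq_cardGF, compactSource_add q k 1, Nat.cast_one, triGF_image_add,
    preimage_add_const_Ici, sub_self]

theorem stmt15 (q k : ℕ) (hk : 1 ≤ k) :
    (1 - triGF (Set.Ici 0) {0}) *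
        triGF (Set.Ici 0) ((Finset.range k).image fun i : ℕ => (q : ℤ) + 2 * (i : ℤ))
      = (1 - triGF (Set.Ici 0) {0} ^ (q + 1)) * triGF (Set.Ici 0) {0} ^ k := by
  change (1 - 𝒟) * triGF (Ici 0) (compactSource q k) = _
  induction q with
  | zero => rw [triGF_compactSource_zero]; ring
  | succ q ih => rw [triGF_compactSource_succ hk, mul_add, ih]; ring
end
end

section
/- Let S ⊆ ℤ be a finite nonempty aligned source, and let C = {q ∈ ℤ : min S ≤ q ≤ max S and q ≡ min S (mod 2)} be the smallest compact source containing S. Let v(X) := ∪_{q∈X} {q−1, q, q+1} for X ⊆ ℤ, and let P(t) := Σ_T (−t)^{|T|} ∈ ℤ[t], the sum ranging over all (finite) subsets T of v(C) ∖ v(S) whose elements are pairwise at distance at least 2. Then, in ℤ[[t]], ℋ_S(t) · t^{|C|−|S|} = P(t) · ℋ_C(t). -/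
/-- `vnbr X = ∪_{q ∈ X} {q-1, q, q+1}`. -/
def vnbr (X : Finset ℤ) : Finset ℤ := X.biUnion fun q => {q - 1, q, q + 1}

/-!
A piece `(q, ℓ) ∈ ℤ × ℕ` lies at position `q` on level `ℓ`, and pieces at positions `p`, `q`
conflict when `|p - q| ≤ 1`. For an aligned source `S`, the parity of `q + ℓ` is constant on an
animal, so letting its pieces fall to their height (for unit weights) yields a heap of dimers with
floor `S`; raising the pieces of such a heap to their height for the weights `2` within a column
and `1` across recovers the animal. Removing the floor `S` and letting the rest fall identifies
these heaps with the heaps whose floor lies in `v(S)`, so `ℋ_S = t^|S| · G(v(S))`, where `G(M)`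
counts heaps with floor in `M`.

Removing an independent set `T` of floor pieces and letting the rest fall is a bijection from the
heaps with floor in `M` containing `T` onto all heaps with floor in `M`, provided `v(T) ⊆ M`; so
inclusion–exclusion over the floor pieces in `M ∖ M'` gives `G(M') = P · G(M)`. For `M = v(C)`
and `M' = v(S)` the condition `v(M ∖ M') ⊆ M` holds because `C` is compact and shares its extreme
points with `S`.
-/

open Finset PowerSeries

theorem mem_vnbr {X : Finset ℤ} {p : ℤ} : p ∈ vnbr X ↔ ∃ s ∈ X, |p - s| ≤ 1 := by
  simp only [vnbr, mem_biUnion, mem_insert, mem_singleton, abs_le]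
  exact exists_congr fun s => and_congr_right fun _ => by omega

theorem subset_vnbr (X : Finset ℤ) : X ⊆ vnbr X :=
  fun p hp => mem_vnbr.mpr ⟨p, hp, by simp⟩

theorem vnbr_mono : Monotone vnbr :=
  fun _ _ h => biUnion_subset_biUnion_of_subset_left _ h

namespace DimerHeap

theorem level_induction {F : Finset (ℤ × ℕ)} {P : ℤ × ℕ → Prop}
    (h : ∀ x ∈ F, (∀ y ∈ F, y.2 < x.2 → P y) → P x) : ∀ x ∈ F, P x := by
  intro x
  induction x using (measure fun x : ℤ × ℕ => x.2).wf.induction with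
  | _ x ih => exact fun hx => h x hx fun y hy hlt => ih y hlt hy

def below (F : Finset (ℤ × ℕ)) (x : ℤ × ℕ) : Finset (ℤ × ℕ) :=
  F.filter fun y => |y.1 - x.1| ≤ 1 ∧ y.2 < x.2

theorem mem_below {F : Finset (ℤ × ℕ)} {x y : ℤ × ℕ} :
    y ∈ below F x ↔ y ∈ F ∧ |y.1 - x.1| ≤ 1 ∧ y.2 < x.2 :=
  mem_filter

/-- The largest total `w`-weight of a descending chain of successively conflicting pieces of `F`
starting at `x`. -/
def height (w : ℤ → ℤ → ℕ) (F : Finset (ℤ × ℕ)) (x : ℤ × ℕ) : ℕ :=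
  (below F x).attach.sup fun y => height w F y.1 + w y.1.1 x.1
termination_by x.2
decreasing_by exact (mem_below.mp y.2).2.2

theorem weight_one_pos : ∀ a b : ℤ, 0 < (1 : ℤ → ℤ → ℕ) a b :=
  fun _ _ => Nat.one_pos

section Height

variable {w : ℤ → ℤ → ℕ} {F : Finset (ℤ × ℕ)} {x y : ℤ × ℕ}

theorem height_eq (w : ℤ → ℤ → ℕ) (F : Finset (ℤ × ℕ)) (x : ℤ × ℕ) :
    height w F x = (below F x).sup fun y => height w F y + w y.1 x.1 := by
  rw [height]
  exact sup_attach (below F x) fun y => height w F y + w y.1 x.1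

theorem le_height (hy : y ∈ below F x) : height w F y + w y.1 x.1 ≤ height w F x := by
  rw [height_eq w F x]
  exact le_sup (f := fun y => height w F y + w y.1 x.1) hy

theorem exists_height_eq (h : height w F x ≠ 0) :
    ∃ y ∈ below F x, height w F x = height w F y + w y.1 x.1 := by
  rw [height_eq] at h ⊢
  have hne : (below F x).Nonempty := by
    contrapose! h
    rw [h, sup_empty]
    rfl
  exact exists_mem_eq_sup _ hne _

theorem height_of_snd_eq_zero (w : ℤ → ℤ → ℕ) (F : Finset (ℤ × ℕ)) {x : ℤ × ℕ} (hx : x.2 = 0) :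
    height w F x = 0 := by
  rw [height_eq, show below F x = ∅ by ext y; simp [mem_below, hx], sup_empty]
  rfl

theorem height_lt_height (hw : ∀ a b, 0 < w a b) (hy : y ∈ below F x) :
    height w F y < height w F x :=
  (Nat.lt_add_of_pos_right (hw _ _)).trans_le (le_height hy)

theorem height_eq_zero_iff (hw : ∀ a b, 0 < w a b) : height w F x = 0 ↔ below F x = ∅ := by
  refine ⟨fun h => eq_empty_of_forall_notMem fun y hy => ?_, fun h => ?_⟩
  · exact absurd (height_lt_height hw hy) (by omega)
  · rw [height_eq, h, sup_empty]
    rfl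

theorem height_eq_snd (h₁ : ∀ x ∈ F, ∀ y ∈ below F x, y.2 + w y.1 x.1 ≤ x.2)
    (h₂ : ∀ x ∈ F, x.2 ≠ 0 → ∃ y ∈ below F x, y.2 + w y.1 x.1 = x.2) :
    ∀ x ∈ F, height w F x = x.2 := by
  refine level_induction fun x hx ih => le_antisymm ?_ ?_
  · rw [height_eq]
    refine Finset.sup_le fun y hy => ?_
    obtain ⟨hyF, -, hlt⟩ := mem_below.mp hy
    rw [ih y hyF hlt]
    exact h₁ x hx y hy
  · rcases eq_or_ne x.2 0 with h0 | h0
    · omega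
    · obtain ⟨y, hy, hyx⟩ := h₂ x hx h0
      obtain ⟨hyF, -, hlt⟩ := mem_below.mp hy
      calc x.2 = height w F y + w y.1 x.1 := by rw [ih y hyF hlt, hyx]
        _ ≤ height w F x := le_height hy

end Height

def Admissible (F : Finset (ℤ × ℕ)) : Prop :=
  ∀ x ∈ F, ∀ y ∈ F, x ≠ y → |x.1 - y.1| ≤ 1 → x.2 ≠ y.2

theorem Admissible.mono {F G : Finset (ℤ × ℕ)} (hF : Admissible F) (hG : G ⊆ F) :
    Admissible G :=
  fun x hx y hy => hF x (hG hx) y (hG hy)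

theorem Admissible.lt_iff_height_lt {w : ℤ → ℤ → ℕ} (hw : ∀ a b, 0 < w a b)
    {F : Finset (ℤ × ℕ)} (hF : Admissible F) {x y : ℤ × ℕ} (hx : x ∈ F) (hy : y ∈ F)
    (hxy : |y.1 - x.1| ≤ 1) : y.2 < x.2 ↔ height w F y < height w F x := by
  refine ⟨fun h => height_lt_height hw (mem_below.mpr ⟨hy, hxy, h⟩), fun h => ?_⟩
  rcases lt_trichotomy y.2 x.2 with hlt | heq | hgt
  · exact hlt
  · rcases eq_or_ne y x with rfl | hne
    · exact absurd h (lt_irrefl _)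
    · exact absurd heq (hF y hy x hx hne hxy)
  · have := height_lt_height (w := w) hw (mem_below.mpr ⟨hx, by rwa [abs_sub_comm], hgt⟩)
    omega

def IsRelevelling (F : Finset (ℤ × ℕ)) (f : ℤ × ℕ → ℤ × ℕ) : Prop :=
  (∀ x ∈ F, (f x).1 = x.1) ∧
    ∀ x ∈ F, ∀ y ∈ F, |y.1 - x.1| ≤ 1 → (y.2 < x.2 ↔ (f y).2 < (f x).2)

namespace IsRelevelling

variable {F : Finset (ℤ × ℕ)} {f : ℤ × ℕ → ℤ × ℕ}

theorem mono (hf : IsRelevelling F f) {G : Finset (ℤ × ℕ)} (hG : G ⊆ F) :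
    IsRelevelling G f :=
  ⟨fun x hx => hf.1 x (hG hx), fun x hx y hy => hf.2 x (hG hx) y (hG hy)⟩

theorem injOn (hf : IsRelevelling F f) (hF : Admissible F) : Set.InjOn f F := by
  intro x hx y hy hxy
  by_contra hne
  have hpos : x.1 = y.1 := by rw [← hf.1 x hx, ← hf.1 y hy, hxy]
  have hconf : |y.1 - x.1| ≤ 1 := by simp [hpos]
  rcases lt_or_gt_of_ne (hF x hx y hy hne (by rwa [abs_sub_comm])) with hlt | hlt
  · exact absurd ((hf.2 y hy x hx (by rwa [abs_sub_comm])).mp hlt) (by rw [hxy]; simp)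
  · exact absurd ((hf.2 x hx y hy hconf).mp hlt) (by rw [hxy]; simp)

theorem admissible_image (hf : IsRelevelling F f) (hF : Admissible F) :
    Admissible (F.image f) := by
  simp only [Admissible, forall_mem_image]
  intro x hx y hy hne hconf heq
  rw [hf.1 x hx, hf.1 y hy] at hconf
  have hxy : x ≠ y := fun h => hne (h ▸ rfl)
  rcases lt_or_gt_of_ne (hF x hx y hy hxy hconf) with hlt | hlt
  · exact absurd ((hf.2 y hy x hx hconf).mp hlt) (by omega)
  · exact absurd ((hf.2 x hx y hy (by rwa [abs_sub_comm])).mp hlt) (by omega)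

theorem height_image (hf : IsRelevelling F f) (w : ℤ → ℤ → ℕ) :
    ∀ x ∈ F, height w (F.image f) (f x) = height w F x := by
  refine level_induction fun x hx ih => ?_
  have hbelow : below (F.image f) (f x) = (below F x).image f := by
    rw [below, filter_image, below]
    congr 1
    refine filter_congr fun y hy => ?_
    rw [hf.1 y hy, hf.1 x hx]
    exact and_congr_right fun hconf => (hf.2 x hx y hy hconf).symm
  rw [height_eq, height_eq w F x, hbelow, sup_image]
  refine sup_congr rfl fun y hy => ?_
  obtain ⟨hyF, -, hlt⟩ := mem_below.mp hy
  simp only [Function.comp_apply, hf.1 y hyF, hf.1 x hx, ih y hyF hlt]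

end IsRelevelling

def settle (w : ℤ → ℤ → ℕ) (F : Finset (ℤ × ℕ)) : Finset (ℤ × ℕ) :=
  F.image fun x => (x.1, height w F x)

section Settle

variable {w : ℤ → ℤ → ℕ} {F : Finset (ℤ × ℕ)}

theorem isRelevelling_height (hw : ∀ a b, 0 < w a b) (hF : Admissible F) :
    IsRelevelling F fun x => (x.1, height w F x) :=
  ⟨fun _ _ => rfl, fun _ hx _ hy hxy => hF.lt_iff_height_lt hw hx hy hxy⟩

theorem IsRelevelling.settle_image {f : ℤ × ℕ → ℤ × ℕ} (hf : IsRelevelling F f) :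
    settle w (F.image f) = settle w F := by
  rw [settle, settle, image_image]
  exact image_congr fun x hx => by
    simp only [Function.comp_apply, hf.1 x hx, hf.height_image w x hx]

theorem settle_settle (w' : ℤ → ℤ → ℕ) (hw : ∀ a b, 0 < w a b) (hF : Admissible F) :
    settle w' (settle w F) = settle w' F :=
  (isRelevelling_height hw hF).settle_image

theorem settle_eq_self (h : ∀ x ∈ F, height w F x = x.2) : settle w F = F := by
  conv_rhs => rw [← image_id (s := F)]
  exact image_congr fun x hx => Prod.ext rfl (h x hx)

theorem card_settle (hw : ∀ a b, 0 < w a b) (hF : Admissible F) :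
    (settle w F).card = F.card :=
  card_image_of_injOn ((isRelevelling_height hw hF).injOn hF)

theorem admissible_settle (hw : ∀ a b, 0 < w a b) (hF : Admissible F) :
    Admissible (settle w F) :=
  (isRelevelling_height hw hF).admissible_image hF

end Settle

def base (K : Finset (ℤ × ℕ)) : Finset ℤ :=
  (K.filter fun x => x.2 = 0).image Prod.fst

section Base

variable {K : Finset (ℤ × ℕ)}

theorem mem_base {p : ℤ} : p ∈ base K ↔ (p, 0) ∈ K := by
  simp only [base, mem_image, mem_filter]
  constructor
  · rintro ⟨⟨q, n⟩, ⟨hx, rfl⟩, rfl⟩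
    exact hx
  · exact fun h => ⟨(p, 0), ⟨h, rfl⟩, rfl⟩

theorem product_zero_subset_iff {T : Finset ℤ} : T ×ˢ {0} ⊆ K ↔ T ⊆ base K := by
  simp only [subset_iff, mem_product, mem_singleton, mem_base, Prod.forall]
  exact ⟨fun h p hp => h p 0 ⟨hp, rfl⟩, fun h p n ⟨hp, hn⟩ => hn ▸ h hp⟩

theorem card_base_le : (base K).card ≤ K.card :=
  card_image_le.trans (card_filter_le _ _)

theorem Admissible.pairwise_base (hK : Admissible K) :
    (base K : Set ℤ).Pairwise fun a b => 2 ≤ |a - b| := by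
  intro a ha b hb hab
  by_contra hlt
  exact hK (a, 0) (mem_base.mp ha) (b, 0) (mem_base.mp hb) (by simpa using hab)
    (by simp only; linarith) rfl

theorem mem_base_settle {w : ℤ → ℤ → ℕ} {F : Finset (ℤ × ℕ)} {p : ℤ} :
    p ∈ base (settle w F) ↔ ∃ x ∈ F, x.1 = p ∧ height w F x = 0 := by
  simp only [mem_base, settle, mem_image, Prod.mk.injEq]

theorem base_subset_base_settle (w : ℤ → ℤ → ℕ) (F : Finset (ℤ × ℕ)) :
    base F ⊆ base (settle w F) := by
  intro p hp
  exact mem_base_settle.mpr ⟨(p, 0), mem_base.mp hp, rfl, height_of_snd_eq_zero w F rfl⟩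

theorem base_settle {w : ℤ → ℤ → ℕ} (hw : ∀ a b, 0 < w a b) {F : Finset (ℤ × ℕ)}
    (hF : ∀ x ∈ F, x.2 ≠ 0 → (below F x).Nonempty) : base (settle w F) = base F := by
  refine subset_antisymm ?_ (base_subset_base_settle w F)
  intro p hp
  obtain ⟨x, hx, rfl, h0⟩ := mem_base_settle.mp hp
  have hx0 : x.2 = 0 := by
    by_contra hne
    exact (hF x hx hne).ne_empty ((height_eq_zero_iff hw).mp h0)
  exact mem_base.mpr (by rwa [← hx0])

end Base

def IsHeap (K : Finset (ℤ × ℕ)) : Prop :=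
  Admissible K ∧ ∀ x ∈ K, x.2 ≠ 0 → ∃ y ∈ K, |y.1 - x.1| ≤ 1 ∧ y.2 + 1 = x.2

namespace IsHeap

variable {K : Finset (ℤ × ℕ)}

theorem below_nonempty (hK : IsHeap K) : ∀ x ∈ K, x.2 ≠ 0 → (below K x).Nonempty := by
  intro x hx h0
  obtain ⟨y, hy, hconf, hlevel⟩ := hK.2 x hx h0
  exact ⟨y, mem_below.mpr ⟨hy, hconf, by omega⟩⟩

theorem height_one (hK : IsHeap K) : ∀ x ∈ K, height 1 K x = x.2 := by
  refine height_eq_snd (fun x _ y hy => (mem_below.mp hy).2.2) fun x hx h0 => ?_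
  obtain ⟨y, hy, hconf, hlevel⟩ := hK.2 x hx h0
  exact ⟨y, mem_below.mpr ⟨hy, hconf, by omega⟩, hlevel⟩

theorem settle_one (hK : IsHeap K) : settle 1 K = K :=
  settle_eq_self hK.height_one

theorem exists_snd_eq (hK : IsHeap K) : ∀ x ∈ K, ∀ r ≤ x.2, ∃ y ∈ K, y.2 = r := by
  refine level_induction fun x hx ih r hr => ?_
  rcases hr.eq_or_lt with rfl | hlt
  · exact ⟨x, hx, rfl⟩
  · obtain ⟨y, hy, -, hlevel⟩ := hK.2 x hx (by omega)
    exact ih y hy (by omega) r (by omega)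

theorem snd_lt_card (hK : IsHeap K) {x : ℤ × ℕ} (hx : x ∈ K) : x.2 < K.card := by
  have hlevels : range (x.2 + 1) ⊆ K.image Prod.snd := fun r hr =>
    mem_image.mpr (hK.exists_snd_eq x hx r (Nat.lt_succ_iff.mp (mem_range.mp hr)))
  have := card_le_card hlevels
  rw [card_range] at this
  exact this.trans card_image_le

theorem fst_mem_iterate_vnbr (hK : IsHeap K) : ∀ x ∈ K, x.1 ∈ vnbr^[x.2] (base K) := by
  refine level_induction fun x hx ih => ?_
  rcases eq_or_ne x.2 0 with h0 | h0
  · rw [h0]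
    exact mem_base.mpr (by rwa [← h0])
  · obtain ⟨y, hy, hconf, hlevel⟩ := hK.2 x hx h0
    rw [← hlevel, Function.iterate_succ_apply']
    exact mem_vnbr.mpr ⟨y.1, ih y hy (by omega), by rwa [abs_sub_comm]⟩

end IsHeap

theorem isHeap_settle_one {F : Finset (ℤ × ℕ)} (hF : Admissible F) :
    IsHeap (settle 1 F) := by
  refine ⟨admissible_settle weight_one_pos hF, ?_⟩
  simp only [settle, forall_mem_image]
  intro x _ h0
  obtain ⟨y, hy, hxy⟩ := exists_height_eq h0
  obtain ⟨hyF, hconf, -⟩ := mem_below.mp hy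
  exact ⟨(y.1, height 1 F y), mem_image_of_mem _ hyF, hconf, by simp [hxy]⟩

def heapsOn (M : Finset ℤ) (j : ℕ) : Set (Finset (ℤ × ℕ)) :=
  {K | IsHeap K ∧ base K ⊆ M ∧ K.card = j}

theorem finite_heapsOn (M : Finset ℤ) (j : ℕ) : (heapsOn M j).Finite := by
  refine (vnbr^[j] M ×ˢ range j).powerset.finite_toSet.subset ?_
  rintro K ⟨hK, hbase, rfl⟩
  simp only [coe_powerset, Set.mem_preimage, Set.mem_powerset_iff, coe_subset]
  intro x hx
  have hlt := hK.snd_lt_card hx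
  refine mem_product.mpr ⟨?_, mem_range.mpr hlt⟩
  exact vnbr_mono.monotone_iterate_of_le_map (subset_vnbr M) hlt.le
    ((vnbr_mono.iterate x.2) hbase (hK.fst_mem_iterate_vnbr x hx))

noncomputable def heapGF (M : Finset ℤ) : PowerSeries ℤ :=
  PowerSeries.mk fun j => ((heapsOn M j).ncard : ℤ)

def lift (H : Finset (ℤ × ℕ)) : Finset (ℤ × ℕ) :=
  H.image fun x => (x.1, x.2 + 1)

theorem isRelevelling_lift (H : Finset (ℤ × ℕ)) : IsRelevelling H fun x => (x.1, x.2 + 1) :=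
  ⟨fun _ _ => rfl, fun _ _ _ _ _ => by simp⟩

theorem card_lift (H : Finset (ℤ × ℕ)) : (lift H).card = H.card :=
  card_image_of_injective _ fun a b h => by
    simp only [Prod.mk.injEq, add_left_inj] at h
    exact Prod.ext h.1 h.2

theorem snd_ne_zero_of_mem_lift {H : Finset (ℤ × ℕ)} {x : ℤ × ℕ} (hx : x ∈ lift H) : x.2 ≠ 0 := by
  obtain ⟨a, -, rfl⟩ := mem_image.mp hx
  exact Nat.succ_ne_zero a.2

theorem disjoint_product_zero_lift (T : Finset ℤ) (H : Finset (ℤ × ℕ)) :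
    Disjoint (T ×ˢ {0}) (lift H) :=
  disjoint_left.mpr fun _ hx hx' =>
    snd_ne_zero_of_mem_lift hx' (mem_singleton.mp (mem_product.mp hx).2)

section Stacking

variable {T : Finset ℤ}

theorem admissible_product_zero_union_lift (hT : (T : Set ℤ).Pairwise fun a b => 2 ≤ |a - b|)
    {H : Finset (ℤ × ℕ)} (hH : Admissible H) : Admissible (T ×ˢ {0} ∪ lift H) := by
  intro x hx y hy hne hconf heq
  rcases mem_union.mp hx with hx | hx <;> rcases mem_union.mp hy with hy | hy
  · have hpos : x.1 ≠ y.1 := fun h => hne (Prod.ext h heq)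
    have := hT (mem_product.mp hx).1 (mem_product.mp hy).1 hpos
    linarith
  · exact snd_ne_zero_of_mem_lift hy (heq ▸ mem_singleton.mp (mem_product.mp hx).2)
  · exact snd_ne_zero_of_mem_lift hx (heq ▸ mem_singleton.mp (mem_product.mp hy).2)
  · obtain ⟨a, ha, rfl⟩ := mem_image.mp hx
    obtain ⟨b, hb, rfl⟩ := mem_image.mp hy
    exact hH a ha b hb (fun h => hne (h ▸ rfl)) hconf (by simpa using heq)

def insertBase (T : Finset ℤ) (H : Finset (ℤ × ℕ)) : Finset (ℤ × ℕ) :=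
  settle 1 (T ×ˢ {0} ∪ lift H)

def eraseBase (T : Finset ℤ) (K : Finset (ℤ × ℕ)) : Finset (ℤ × ℕ) :=
  settle 1 (K \ T ×ˢ {0})

theorem isHeap_insertBase (hT : (T : Set ℤ).Pairwise fun a b => 2 ≤ |a - b|)
    {H : Finset (ℤ × ℕ)} (hH : IsHeap H) : IsHeap (insertBase T H) :=
  isHeap_settle_one (admissible_product_zero_union_lift hT hH.1)

theorem card_insertBase (hT : (T : Set ℤ).Pairwise fun a b => 2 ≤ |a - b|)
    {H : Finset (ℤ × ℕ)} (hH : IsHeap H) : (insertBase T H).card = H.card + T.card := by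
  rw [insertBase, card_settle weight_one_pos
    (admissible_product_zero_union_lift hT hH.1),
    card_union_of_disjoint (disjoint_product_zero_lift T H), card_product, card_singleton,
    mul_one, card_lift, add_comm]

theorem subset_base_insertBase (H : Finset (ℤ × ℕ)) : T ⊆ base (insertBase T H) :=
  (product_zero_subset_iff.mp subset_union_left).trans (base_subset_base_settle _ _)

theorem base_insertBase_subset {H : Finset (ℤ × ℕ)} (hH : IsHeap H) :
    base (insertBase T H) ⊆ T ∪ (base H \ vnbr T) := by
  intro p hp
  obtain ⟨x, hx, rfl, h0⟩ := mem_base_settle.mp hp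
  have hempty := (height_eq_zero_iff weight_one_pos).mp h0
  rcases mem_union.mp hx with hx | hx
  · exact mem_union_left _ (mem_product.mp hx).1
  obtain ⟨a, ha, rfl⟩ := mem_image.mp hx
  have ha0 : a.2 = 0 := by
    by_contra ha0
    obtain ⟨b, hb, hconf, hlevel⟩ := hH.2 a ha ha0
    refine (eq_empty_iff_forall_notMem.mp hempty) (b.1, b.2 + 1) (mem_below.mpr ⟨?_, hconf, ?_⟩)
    · exact mem_union_right _ (mem_image_of_mem _ hb)
    · simp only; omega
  have hfar : a.1 ∉ vnbr T := by
    intro hnear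
    obtain ⟨t, ht, hconf⟩ := mem_vnbr.mp hnear
    refine (eq_empty_iff_forall_notMem.mp hempty) (t, 0) (mem_below.mpr ⟨?_, ?_, ?_⟩)
    · exact mem_union_left _ (mem_product.mpr ⟨ht, mem_singleton_self 0⟩)
    · rwa [abs_sub_comm]
    · simp
  exact mem_union_right _ (mem_sdiff.mpr ⟨mem_base.mpr (by rwa [← ha0]), hfar⟩)

theorem isHeap_eraseBase {K : Finset (ℤ × ℕ)} (hK : IsHeap K) : IsHeap (eraseBase T K) :=
  isHeap_settle_one (hK.1.mono sdiff_subset)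

theorem card_eraseBase {K : Finset (ℤ × ℕ)} (hK : IsHeap K) (hT : T ⊆ base K) :
    (eraseBase T K).card + T.card = K.card := by
  have hsub := product_zero_subset_iff.mpr hT
  have hle := card_le_card hsub
  rw [card_product, card_singleton, mul_one] at hle
  rw [eraseBase, card_settle weight_one_pos (hK.1.mono sdiff_subset),
    card_sdiff_of_subset hsub, card_product, card_singleton, mul_one]
  omega

theorem base_eraseBase_subset {K : Finset (ℤ × ℕ)} (hK : IsHeap K) :
    base (eraseBase T K) ⊆ base K ∪ vnbr T := by
  intro p hp
  obtain ⟨x, hx, rfl, h0⟩ := mem_base_settle.mp hp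
  have hempty := (height_eq_zero_iff weight_one_pos).mp h0
  obtain ⟨hxK, -⟩ := mem_sdiff.mp hx
  rcases eq_or_ne x.2 0 with hx0 | hx0
  · exact mem_union_left _ (mem_base.mpr (by rwa [← hx0]))
  obtain ⟨y, hyK, hconf, hlevel⟩ := hK.2 x hxK hx0
  have hyT : y ∈ T ×ˢ {0} := by
    by_contra hyT
    exact (eq_empty_iff_forall_notMem.mp hempty) y
      (mem_below.mpr ⟨mem_sdiff.mpr ⟨hyK, hyT⟩, hconf, by omega⟩)
  exact mem_union_right _ (mem_vnbr.mpr ⟨y.1, (mem_product.mp hyT).1, by rwa [abs_sub_comm]⟩)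

theorem eraseBase_insertBase (hT : (T : Set ℤ).Pairwise fun a b => 2 ≤ |a - b|)
    {H : Finset (ℤ × ℕ)} (hH : IsHeap H) : eraseBase T (insertBase T H) = H := by
  set F := T ×ˢ {0} ∪ lift H
  have hF := admissible_product_zero_union_lift hT hH.1
  set g : ℤ × ℕ → ℤ × ℕ := fun x => (x.1, height 1 F x)
  have hfloor : (T ×ˢ {0}).image g = T ×ˢ {0} := by
    conv_rhs => rw [← image_id (s := T ×ˢ {0})]
    refine image_congr fun x hx => Prod.ext rfl ?_
    exact (height_of_snd_eq_zero 1 F (mem_singleton.mp (mem_product.mp hx).2)).trans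
      (mem_singleton.mp (mem_product.mp hx).2).symm
  have hdisj : Disjoint (T ×ˢ {0}) ((lift H).image g) := by
    refine disjoint_left.mpr fun z hz hz' => ?_
    obtain ⟨x, hx, rfl⟩ := mem_image.mp hz'
    have hfloor_mem : ((x.1, 0) : ℤ × ℕ) ∈ F :=
      mem_union_left _ (mem_product.mpr ⟨(mem_product.mp hz).1, mem_singleton_self 0⟩)
    have hlt : height 1 F (x.1, 0) < height 1 F x := height_lt_height weight_one_pos
      (mem_below.mpr ⟨hfloor_mem, by simp, Nat.pos_of_ne_zero (snd_ne_zero_of_mem_lift hx)⟩)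
    rw [height_of_snd_eq_zero 1 F rfl] at hlt
    exact hlt.ne' (mem_singleton.mp (mem_product.mp hz).2)
  have hupper : insertBase T H \ T ×ˢ {0} = (lift H).image g := by
    rw [insertBase, settle, image_union, hfloor, union_sdiff_cancel_left hdisj]
  rw [eraseBase, hupper, ((isRelevelling_height weight_one_pos hF).mono
    subset_union_right).settle_image, lift, (isRelevelling_lift H).settle_image,
    hH.settle_one]

theorem insertBase_eraseBase {K : Finset (ℤ × ℕ)} (hK : IsHeap K) (hT : T ⊆ base K) :
    insertBase T (eraseBase T K) = K := by
  have hsub := product_zero_subset_iff.mpr hT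
  set G := K \ T ×ˢ {0}
  have hG : Admissible G := hK.1.mono sdiff_subset
  -- `ψ` puts every piece where `insertBase T (eraseBase T K)` puts it, before settling.
  set ψ : ℤ × ℕ → ℤ × ℕ := fun z => if z ∈ T ×ˢ {0} then z else (z.1, height 1 G z + 1)
  have hψ : IsRelevelling K ψ := by
    refine ⟨fun z _ => by simp only [ψ]; split_ifs <;> rfl, fun x hx y hy hconf => ?_⟩
    have hfloor : ∀ z ∈ K, z ∈ T ×ˢ ({0} : Finset ℕ) → ∀ z' ∈ K, z' ∉ T ×ˢ ({0} : Finset ℕ) →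
        |z.1 - z'.1| ≤ 1 → z'.2 ≠ 0 := fun z hz hzT z' hz' hz'T hconf' h0 =>
      hK.1 z hz z' hz' (fun h => hz'T (h ▸ hzT)) hconf'
        ((mem_singleton.mp (mem_product.mp hzT).2).trans h0.symm)
    by_cases hxT : x ∈ T ×ˢ {0} <;> by_cases hyT : y ∈ T ×ˢ {0} <;>
      simp only [ψ, hxT, hyT, if_true, if_false]
    · have := hfloor x hx hxT y hy hyT (by rwa [abs_sub_comm])
      have := mem_singleton.mp (mem_product.mp hxT).2
      omega
    · have := hfloor y hy hyT x hx hxT hconf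
      have := mem_singleton.mp (mem_product.mp hyT).2
      omega
    · rw [hG.lt_iff_height_lt (w := 1) weight_one_pos (mem_sdiff.mpr ⟨hx, hxT⟩)
        (mem_sdiff.mpr ⟨hy, hyT⟩) hconf]
      omega
  have himage : K.image ψ = T ×ˢ {0} ∪ lift (eraseBase T K) := by
    conv_lhs => rw [← union_sdiff_of_subset hsub]
    rw [image_union, eraseBase, lift, settle, image_image]
    congr 1
    · conv_rhs => rw [← image_id (s := T ×ˢ {0})]
      exact image_congr fun z hz => if_pos hz
    · exact image_congr fun z hz => if_neg (mem_sdiff.mp hz).2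
  rw [insertBase, ← himage, hψ.settle_image, hK.settle_one]

end Stacking

section Counting

variable {T : Finset ℤ}

theorem invOn_eraseBase_insertBase (hT : (T : Set ℤ).Pairwise fun a b => 2 ≤ |a - b|) :
    Set.InvOn (eraseBase T) (insertBase T) {H | IsHeap H} {K | IsHeap K ∧ T ⊆ base K} :=
  ⟨fun _ hH => eraseBase_insertBase hT hH, fun _ hK => insertBase_eraseBase hK.1 hK.2⟩

theorem ncard_heapsOn_eq_ncard_subset_base (hT : (T : Set ℤ).Pairwise fun a b => 2 ≤ |a - b|)
    {M : Finset ℤ} (hTM : vnbr T ⊆ M) (j : ℕ) :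
    (heapsOn M j).ncard = {K | K ∈ heapsOn M (j + T.card) ∧ T ⊆ base K}.ncard := by
  have hinv := invOn_eraseBase_insertBase hT
  refine Set.BijOn.ncard_eq (Set.InvOn.bijOn ⟨hinv.1.mono fun H hH => hH.1,
    hinv.2.mono fun K hK => ⟨hK.1.1, hK.2⟩⟩ ?_ ?_)
  · rintro H ⟨hH, hbase, rfl⟩
    refine ⟨⟨isHeap_insertBase hT hH, ?_, card_insertBase hT hH⟩, subset_base_insertBase H⟩
    exact (base_insertBase_subset hH).trans
      (union_subset ((subset_vnbr T).trans hTM) (sdiff_subset.trans hbase))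
  · rintro K ⟨⟨hK, hbase, hcard⟩, hTK⟩
    refine ⟨isHeap_eraseBase hK, (base_eraseBase_subset hK).trans (union_subset hbase hTM), ?_⟩
    have := card_eraseBase hK hTK
    omega

theorem ncard_heapsOn_vnbr (hT : (T : Set ℤ).Pairwise fun a b => 2 ≤ |a - b|) (j : ℕ) :
    (heapsOn (vnbr T) j).ncard = {K | IsHeap K ∧ base K = T ∧ K.card = j + T.card}.ncard := by
  have hinv := invOn_eraseBase_insertBase hT
  refine Set.BijOn.ncard_eq (Set.InvOn.bijOn ⟨hinv.1.mono fun H hH => hH.1,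
    hinv.2.mono fun K hK => ⟨hK.1, hK.2.1.ge⟩⟩ ?_ ?_)
  · rintro H ⟨hH, hbase, rfl⟩
    refine ⟨isHeap_insertBase hT hH, subset_antisymm ?_ (subset_base_insertBase H),
      card_insertBase hT hH⟩
    refine (base_insertBase_subset hH).trans (union_subset subset_rfl ?_)
    rw [sdiff_eq_empty_iff_subset.mpr hbase]
    exact empty_subset T
  · rintro K ⟨hK, hbase, hcard⟩
    refine ⟨isHeap_eraseBase hK, (base_eraseBase_subset hK).trans ?_, ?_⟩
    · rw [hbase]
      exact union_subset (subset_vnbr T) subset_rfl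
    · have := card_eraseBase hK hbase.ge
      omega

theorem coeff_X_pow_mul_heapGF (hT : (T : Set ℤ).Pairwise fun a b => 2 ≤ |a - b|)
    {M : Finset ℤ} (hTM : vnbr T ⊆ M) (N : ℕ) :
    coeff N ((X : PowerSeries ℤ) ^ T.card * heapGF M) =
      {K | K ∈ heapsOn M N ∧ T ⊆ base K}.ncard := by
  rw [coeff_X_pow_mul', heapGF, coeff_mk]
  split_ifs with h
  · rw [ncard_heapsOn_eq_ncard_subset_base hT hTM, Nat.sub_add_cancel h]
  · suffices {K | K ∈ heapsOn M N ∧ T ⊆ base K} = ∅ by simp [this]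
    refine Set.eq_empty_of_forall_notMem fun K ⟨⟨_, _, hcard⟩, hTK⟩ => h ?_
    exact hcard ▸ (card_le_card hTK).trans card_base_le

end Counting

def independentSubsets (U : Finset ℤ) : Finset (Finset ℤ) :=
  U.powerset.filter fun T => ∀ a ∈ T, ∀ b ∈ T, a ≠ b → 2 ≤ |a - b|

theorem mem_independentSubsets {U T : Finset ℤ} :
    T ∈ independentSubsets U ↔ T ⊆ U ∧ (T : Set ℤ).Pairwise fun a b => 2 ≤ |a - b| := by
  simp only [independentSubsets, mem_filter, mem_powerset]
  rfl

theorem sum_independentSubsets_sdiff {M M' B : Finset ℤ} (hBM : B ⊆ M)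
    (hB : (B : Set ℤ).Pairwise fun a b => 2 ≤ |a - b|) :
    ∑ T ∈ (independentSubsets (M \ M')).filter (· ⊆ B), (-1 : ℤ) ^ T.card =
      if B ⊆ M' then 1 else 0 := by
  have hsubsets : (independentSubsets (M \ M')).filter (· ⊆ B) = (B ∩ (M \ M')).powerset := by
    ext T
    simp only [mem_filter, mem_independentSubsets, mem_powerset, subset_inter_iff]
    exact ⟨fun ⟨⟨hU, _⟩, hTB⟩ => ⟨hTB, hU⟩,
      fun ⟨hTB, hU⟩ => ⟨⟨hU, hB.mono (coe_subset.mpr hTB)⟩, hTB⟩⟩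
  have hempty : B ∩ (M \ M') = ∅ ↔ B ⊆ M' := by
    rw [← disjoint_iff_inter_eq_empty]
    exact ⟨fun h p hp => by_contra fun hp' => disjoint_left.mp h hp (mem_sdiff.mpr ⟨hBM hp, hp'⟩),
      fun h => disjoint_of_subset_left h disjoint_sdiff⟩
  rw [hsubsets, sum_powerset_neg_one_pow_card]
  exact if_congr hempty rfl rfl

/-- Inclusion–exclusion over the floor pieces of a heap lying in `M \ M'`. -/
theorem heapGF_eq_sum_mul {M M' : Finset ℤ} (hM' : M' ⊆ M) (hgap : vnbr (M \ M') ⊆ M) :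
    heapGF M' = (∑ T ∈ independentSubsets (M \ M'), (-X) ^ T.card) * heapGF M := by
  ext N
  set Ks := (finite_heapsOn M N).toFinset
  have hKs : ∀ p : Finset (ℤ × ℕ) → Prop, [DecidablePred p] →
      ((Ks.filter p).card : ℤ) = {K | K ∈ heapsOn M N ∧ p K}.ncard := fun p _ => by
    rw [← Set.ncard_coe_finset, coe_filter]
    simp only [Ks, Set.Finite.mem_toFinset]
  have hmarked : ∀ T ∈ independentSubsets (M \ M'), coeff N ((-X) ^ T.card * heapGF M) =
      (-1) ^ T.card * ((Ks.filter fun K => T ⊆ base K).card : ℤ) := by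
    intro T hT
    obtain ⟨hTU, hTpair⟩ := mem_independentSubsets.mp hT
    rw [neg_pow, mul_assoc, show (-1 : PowerSeries ℤ) ^ T.card = C ((-1 : ℤ) ^ T.card) by simp,
      coeff_C_mul, coeff_X_pow_mul_heapGF hTpair ((vnbr_mono hTU).trans hgap), hKs]
  have hM'N : heapsOn M' N = {K | K ∈ heapsOn M N ∧ base K ⊆ M'} := by
    ext K
    simp only [heapsOn, Set.mem_ofPred_eq]
    exact ⟨fun ⟨hK, hb, hc⟩ => ⟨⟨hK, hb.trans hM', hc⟩, hb⟩, fun ⟨⟨hK, _, hc⟩, hb⟩ => ⟨hK, hb, hc⟩⟩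
  calc coeff N (heapGF M') = ((Ks.filter fun K => base K ⊆ M').card : ℤ) := by
        rw [heapGF, coeff_mk, hKs, hM'N]
    _ = ∑ K ∈ Ks, ∑ T ∈ (independentSubsets (M \ M')).filter (· ⊆ base K), (-1 : ℤ) ^ T.card := by
        rw [natCast_card_filter]
        refine sum_congr rfl fun K hK => ?_
        obtain ⟨hK, hbase, -⟩ := (Set.Finite.mem_toFinset _).mp hK
        exact (sum_independentSubsets_sdiff hbase hK.1.pairwise_base).symm
    _ = ∑ T ∈ independentSubsets (M \ M'),
          (-1) ^ T.card * ((Ks.filter fun K => T ⊆ base K).card : ℤ) := by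
        simp_rw [sum_filter, natCast_card_filter, mul_sum, mul_ite, mul_one, mul_zero]
        exact sum_comm
    _ = coeff N ((∑ T ∈ independentSubsets (M \ M'), (-X) ^ T.card) * heapGF M) := by
        rw [sum_mul, map_sum]
        exact sum_congr rfl fun T hT => (hmarked T hT).symm

end DimerHeap

open DimerHeap

def animalWeight (a b : ℤ) : ℕ :=
  if a = b then 2 else 1

theorem animalWeight_pos : ∀ a b, 0 < animalWeight a b := fun a b => by
  unfold animalWeight
  split_ifs <;> omega

theorem pairwise_of_emod_two_eq {S : Finset ℤ} {ε : ℤ} (hS : ∀ s ∈ S, s % 2 = ε) :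
    (S : Set ℤ).Pairwise fun a b => 2 ≤ |a - b| := by
  intro a ha b hb hab
  have := hS a ha
  have := hS b hb
  rw [le_abs]
  omega

theorem admissible_of_emod_two_eq {A : Finset (ℤ × ℕ)} {ε : ℤ}
    (hA : ∀ x ∈ A, (x.1 + x.2) % 2 = ε) : Admissible A := by
  intro x hx y hy hne hconf heq
  have := hA x hx
  have := hA y hy
  rw [abs_le] at hconf
  exact hne (Prod.ext (by omega) heq)

namespace IsTriAnimal

variable {Q : Set ℤ} {S : Finset ℤ} {A : Finset (ℤ × ℕ)}

theorem emod_two_eq (hA : IsTriAnimal Q S A) {ε : ℤ} (hS : ∀ s ∈ S, s % 2 = ε) :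
    ∀ x ∈ A, (x.1 + x.2) % 2 = ε := by
  refine level_induction fun x hx ih => ?_
  rcases eq_or_ne x.2 0 with h0 | h0
  · have := hS x.1 ((hA.2.1 x.1).mp (by rwa [← h0]))
    rw [h0]
    simpa using this
  · rcases hA.2.2 x hx (Nat.one_le_iff_ne_zero.mpr h0) with h | h | ⟨h2, h⟩
    all_goals
      have := ih _ h (by simp only; omega)
      simp only at this
      omega

theorem below_nonempty (hA : IsTriAnimal Q S A) : ∀ x ∈ A, x.2 ≠ 0 → (below A x).Nonempty := by
  intro x hx h0
  rcases hA.2.2 x hx (Nat.one_le_iff_ne_zero.mpr h0) with h | h | ⟨-, h⟩ <;>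
    exact ⟨_, mem_below.mpr ⟨h, by simp, by simp only; omega⟩⟩

theorem height_animalWeight (hA : IsTriAnimal Q S A) {ε : ℤ}
    (hpar : ∀ x ∈ A, (x.1 + x.2) % 2 = ε) : ∀ x ∈ A, height animalWeight A x = x.2 := by
  refine height_eq_snd (fun x hx y hy => ?_) fun x hx h0 => ?_
  · obtain ⟨hyA, -, hlt⟩ := mem_below.mp hy
    have := hpar x hx
    have := hpar y hyA
    unfold animalWeight
    split_ifs with hcol
    · rw [hcol] at this
      omega
    · omega
  · rcases hA.2.2 x hx (Nat.one_le_iff_ne_zero.mpr h0) with h | h | ⟨h2, h⟩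
    · exact ⟨_, mem_below.mpr ⟨h, by simp, by simp only; omega⟩,
        by simp only [animalWeight, if_neg (by omega : x.1 - 1 ≠ x.1)]; omega⟩
    · exact ⟨_, mem_below.mpr ⟨h, by simp, by simp only; omega⟩,
        by simp only [animalWeight, if_neg (by omega : x.1 + 1 ≠ x.1)]; omega⟩
    · exact ⟨_, mem_below.mpr ⟨h, by simp, by simp only; omega⟩,
        by simp only [animalWeight, if_true]; omega⟩

theorem base_eq (hA : IsTriAnimal Q S A) : base A = S :=
  ext fun q => mem_base.trans (hA.2.1 q)

end IsTriAnimal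

theorem isTriAnimal_settle {K : Finset (ℤ × ℕ)} (hK : IsHeap K) :
    IsTriAnimal Set.univ (base K) (settle animalWeight K) := by
  refine ⟨fun _ _ => Set.mem_univ _, fun q => ?_, ?_⟩
  · rw [← mem_base, base_settle animalWeight_pos hK.below_nonempty]
  simp only [settle, forall_mem_image]
  intro x _ hpos
  obtain ⟨y, hy, hxy⟩ := exists_height_eq (Nat.one_le_iff_ne_zero.mp hpos)
  obtain ⟨hyK, hconf, -⟩ := mem_below.mp hy
  have hmem : (y.1, height animalWeight K y) ∈ K.image fun x => (x.1, height animalWeight K x) :=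
    mem_image_of_mem _ hyK
  rw [abs_le] at hconf
  by_cases hcol : y.1 = x.1
  · rw [animalWeight, if_pos hcol] at hxy
    refine Or.inr (Or.inr ⟨by omega, ?_⟩)
    convert hmem using 2 <;> omega
  · rw [animalWeight, if_neg hcol] at hxy
    rcases (by omega : y.1 = x.1 - 1 ∨ y.1 = x.1 + 1) with hleft | hright
    · refine Or.inl ?_
      convert hmem using 2 <;> omega
    · refine Or.inr (Or.inl ?_)
      convert hmem using 2 <;> omega

theorem triCount_eq_ncard {S : Finset ℤ} {ε : ℤ} (hS : ∀ s ∈ S, s % 2 = ε) (n : ℕ) :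
    triCount Set.univ S n = {K | IsHeap K ∧ base K = S ∧ K.card = n}.ncard := by
  refine Set.BijOn.ncard_eq (Set.InvOn.bijOn (f := settle 1) (f' := settle animalWeight)
    ⟨?_, ?_⟩ ?_ ?_)
  · rintro A ⟨hA, -⟩
    have hpar := hA.emod_two_eq hS
    rw [settle_settle _ weight_one_pos (admissible_of_emod_two_eq hpar)]
    exact settle_eq_self (hA.height_animalWeight hpar)
  · rintro K ⟨hK, -⟩
    rw [settle_settle _ animalWeight_pos hK.1, hK.settle_one]
  · rintro A ⟨hA, rfl⟩
    have hadm := admissible_of_emod_two_eq (hA.emod_two_eq hS)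
    exact ⟨isHeap_settle_one hadm,
      (base_settle weight_one_pos hA.below_nonempty).trans hA.base_eq,
      card_settle weight_one_pos hadm⟩
  · rintro K ⟨hK, rfl, rfl⟩
    exact ⟨isTriAnimal_settle hK, card_settle animalWeight_pos hK.1⟩

theorem triGF_eq_X_pow_mul_heapGF {S : Finset ℤ} {ε : ℤ} (hS : ∀ s ∈ S, s % 2 = ε) :
    triGF Set.univ S = X ^ S.card * heapGF (vnbr S) := by
  ext n
  rw [coeff_X_pow_mul', triGF, coeff_mk, heapGF, coeff_mk, triCount_eq_ncard hS]
  split_ifs with h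
  · rw [ncard_heapsOn_vnbr (pairwise_of_emod_two_eq hS), Nat.sub_add_cancel h]
  · suffices {K | IsHeap K ∧ base K = S ∧ K.card = n} = ∅ by simp [this]
    refine Set.eq_empty_of_forall_notMem fun K ⟨_, hbase, hcard⟩ => h ?_
    exact hbase ▸ hcard ▸ card_base_le

theorem mem_vnbr_filter_Icc {a b : ℤ} (hab : a ≤ b) (hpar : b % 2 = a % 2) {q : ℤ} :
    q ∈ vnbr ((Icc a b).filter fun c => c % 2 = a % 2) ↔ a - 1 ≤ q ∧ q ≤ b + 1 := by
  simp only [mem_vnbr, mem_filter, mem_Icc, abs_le]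
  constructor
  · rintro ⟨c, ⟨⟨hac, hcb⟩, -⟩, hqc⟩
    omega
  · rintro ⟨haq, hqb⟩
    rcases (by omega : q % 2 = a % 2 ∨ q < a ∨ (a ≤ q ∧ q % 2 ≠ a % 2)) with h | h | h
    · exact ⟨q, ⟨⟨by omega, by omega⟩, h⟩, by omega⟩
    · exact ⟨a, ⟨⟨le_rfl, hab⟩, rfl⟩, by omega⟩
    · exact ⟨q - 1, ⟨⟨by omega, by omega⟩, by omega⟩, by omega⟩

theorem vnbr_sdiff_vnbr_subset {S C : Finset ℤ} {a b : ℤ} (ha : a ∈ S) (hb : b ∈ S)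
    (hC : ∀ q, q ∈ vnbr C ↔ a - 1 ≤ q ∧ q ≤ b + 1) : vnbr (vnbr C \ vnbr S) ⊆ vnbr C := by
  intro q hq
  obtain ⟨p, hp, hqp⟩ := mem_vnbr.mp hq
  obtain ⟨hpC, hpS⟩ := mem_sdiff.mp hp
  have hfar : ∀ s ∈ S, ¬|p - s| ≤ 1 := fun s hs hps => hpS (mem_vnbr.mpr ⟨s, hs, hps⟩)
  have := hfar a ha
  have := hfar b hb
  rw [hC] at hpC ⊢
  rw [abs_le] at *
  omega

theorem stmt17 (S : Finset ℤ) (hS : S.Nonempty)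
    (hal : ∀ a ∈ S, ∀ b ∈ S, a % 2 = b % 2)
    (C : Finset ℤ)
    (hC : C = (Finset.Icc (S.min' hS) (S.max' hS)).filter fun q => q % 2 = S.min' hS % 2)
    (P : Polynomial ℤ)
    (hP : P = ∑ T ∈ (vnbr C \ vnbr S).powerset.filter
        (fun T => ∀ a ∈ T, ∀ b ∈ T, a ≠ b → 2 ≤ |a - b|),
      (-Polynomial.X : Polynomial ℤ) ^ T.card) :
    triGF Set.univ S * PowerSeries.X ^ (C.card - S.card)
      = (P : PowerSeries ℤ) * triGF Set.univ C := by
  have ha := S.min'_mem hS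
  have hb := S.max'_mem hS
  have hSpar : ∀ s ∈ S, s % 2 = S.min' hS % 2 := fun s hs => hal s hs _ ha
  have hCpar : ∀ c ∈ C, c % 2 = S.min' hS % 2 := fun c hc => (mem_filter.mp (hC ▸ hc :)).2
  have hSC : S ⊆ C := fun s hs => hC ▸
    mem_filter.mpr ⟨mem_Icc.mpr ⟨S.min'_le s hs, S.le_max' s hs⟩, hSpar s hs⟩
  have hvC : ∀ q, q ∈ vnbr C ↔ S.min' hS - 1 ≤ q ∧ q ≤ S.max' hS + 1 := fun q =>
    hC ▸ mem_vnbr_filter_Icc (S.min'_le _ hb) (hSpar _ hb)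
  have hP' : (P : PowerSeries ℤ) =
      ∑ T ∈ independentSubsets (vnbr C \ vnbr S), (-X) ^ T.card := by
    rw [hP, ← Polynomial.coeToPowerSeries.ringHom_apply, map_sum]
    refine sum_congr rfl fun T _ => ?_
    simp
  have hX : (X : PowerSeries ℤ) ^ C.card = X ^ (C.card - S.card) * X ^ S.card := by
    rw [← pow_add, Nat.sub_add_cancel (card_le_card hSC)]
  rw [triGF_eq_X_pow_mul_heapGF hSpar, triGF_eq_X_pow_mul_heapGF hCpar,
    heapGF_eq_sum_mul (vnbr_mono hSC) (vnbr_sdiff_vnbr_subset ha hb hvC), hP', hX]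
  ring
end
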